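/- arXiv:2211.17137 — 9 statements merged into one kernel-verified Lean document; each statement's English description precedes it below -/
import Mathlib

section
/- Let X be a topological space and S a semigroup of continuous functions X → X containing the identity. If there exists a continuous scalar valued, unitarily invariant, strictly positive definite kernel on X (i.e. P⁺(X,S) is nonempty), then every function in S is injective. -/
open scoped ComplexOrder

/-- Complex "inner product" on finite tuples, linear in the first argument and
conjugate-linear in the second: `cip v w = ∑ i, v i * conj (w i)`. -/
noncomputable def cip {ι : Type*} [Fintype ι] (v w : ι → ℂ) : ℂ :=
  ∑ i, v i * (starRingEnd ℂ) (w i)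

/-- A matrix valued kernel is positive definite. -/
def IsPDMat {X : Type*} {ℓ : ℕ} (K : X → X → Matrix (Fin ℓ) (Fin ℓ) ℂ) : Prop :=
  ∀ (n : ℕ) (x : Fin n → X), Function.Injective x →
    ∀ v : Fin n → Fin ℓ → ℂ,
      0 ≤ ∑ μ : Fin n, ∑ ν : Fin n, cip ((K (x μ) (x ν)).mulVec (v μ)) (v ν)

/-- A matrix valued kernel is strictly positive definite. -/
def IsSPDMat {X : Type*} {ℓ : ℕ} (K : X → X → Matrix (Fin ℓ) (Fin ℓ) ℂ) : Prop :=
  ∀ (n : ℕ) (x : Fin n → X), Function.Injective x →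
    ∀ v : Fin n → Fin ℓ → ℂ, (∃ μ, v μ ≠ 0) →
      0 < ∑ μ : Fin n, ∑ ν : Fin n, cip ((K (x μ) (x ν)).mulVec (v μ)) (v ν)

/-- A scalar valued kernel is positive definite. -/
def IsPDKer {X : Type*} (k : X → X → ℂ) : Prop :=
  ∀ (n : ℕ) (x : Fin n → X), Function.Injective x →
    ∀ c : Fin n → ℂ,
      0 ≤ ∑ μ : Fin n, ∑ ν : Fin n, c μ * (starRingEnd ℂ) (c ν) * k (x μ) (x ν)

/-- A scalar valued kernel is strictly positive definite. -/
def IsSPDKer {X : Type*} (k : X → X → ℂ) : Prop :=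
  ∀ (n : ℕ) (x : Fin n → X), Function.Injective x →
    ∀ c : Fin n → ℂ, (∃ μ, c μ ≠ 0) →
      0 < ∑ μ : Fin n, ∑ ν : Fin n, c μ * (starRingEnd ℂ) (c ν) * k (x μ) (x ν)

/-- The scalar valued projection `K_v(x,y) = ⟨K(x,y)v, v⟩` of a matrix valued kernel. -/
noncomputable def projKer {X : Type*} {ℓ : ℕ} (K : X → X → Matrix (Fin ℓ) (Fin ℓ) ℂ)
    (v : Fin ℓ → ℂ) : X → X → ℂ :=
  fun x y => cip ((K x y).mulVec v) v

/-- If `P⁺(X,S)` is nonempty, i.e. there exists a continuous unitarily invariant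
strictly positive definite scalar valued kernel on `X`, then every function in `S` is injective. -/
theorem stmt_1 {X : Type*} [TopologicalSpace X]
    (S : Set (X → X))
    (hScont : ∀ ψ ∈ S, Continuous ψ)
    (hSid : (id : X → X) ∈ S)
    (hScomp : ∀ φ ∈ S, ∀ ψ ∈ S, φ ∘ ψ ∈ S)
    (hne : ∃ k : X → X → ℂ,
      (Continuous fun p : X × X => k p.1 p.2) ∧
      (∀ ψ ∈ S, ∀ x y : X, k (ψ x) (ψ y) = k x y) ∧
      IsSPDKer k) :
    ∀ φ ∈ S, Function.Injective φ := by
  obtain ⟨k, -, hinv, hspd⟩ := hne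
  intro φ hφ a b hab
  by_contra hne'
  set x : Fin 2 → X := ![a, b] with hx
  have hxinj : Function.Injective x := by
    intro i j hij
    fin_cases i <;> fin_cases j <;> simp_all [x]
  have c : Fin 2 → ℂ := ![1, -1]
  have hpos := hspd 2 x hxinj ![1, -1] ⟨0, by norm_num⟩
  have haa : k (φ b) (φ b) = k a a := by
    have h := hinv φ hφ a a; rwa [hab] at h
  have hxy : k a b = k a a := by
    have h := hinv φ hφ a b; rw [hab] at h; rw [← h]; exact haa
  have hyx : k b a = k a a := by
    have h := hinv φ hφ b a; rw [hab] at h; rw [← h]; exact haa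
  have hyy : k b b = k a a := by
    have h := hinv φ hφ b b; rw [← h]; exact haa
  have hsum : ∑ μ : Fin 2, ∑ ν : Fin 2,
      (![1, -1] : Fin 2 → ℂ) μ * (starRingEnd ℂ) ((![1, -1] : Fin 2 → ℂ) ν) * k (x μ) (x ν) = 0 := by
    simp [Fin.sum_univ_two, x, hxy, hyx, hyy]
  rw [hsum] at hpos
  exact lt_irrefl _ hpos
end

section
/- Let X be a topological space and S a semigroup of continuous functions X → X containing the identity, and suppose P⁺(X,S) is nonempty. Then P⁺_proj(X,S,ℂ^ℓ) = P⁺(X,S,ℂ^ℓ) holds for some ℓ ≥ 2 if and only if P⁺_proj(X,S,ℂ^m) = P⁺(X,S,ℂ^m) holds for every m with 2 ≤ m ≤ ℓ. -/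
open scoped ComplexOrder

/-- The class `P⁺(X,S,ℂ^ℓ)` of continuous unitarily invariant strictly positive definite
matrix valued kernels. -/
def PplusMat {X : Type*} [TopologicalSpace X] (S : Set (X → X)) (ℓ : ℕ) :
    Set (X → X → Matrix (Fin ℓ) (Fin ℓ) ℂ) :=
  {K | (Continuous fun p : X × X => K p.1 p.2) ∧
       (∀ ψ ∈ S, ∀ x y : X, K (ψ x) (ψ y) = K x y) ∧ IsSPDMat K}

/-- The class `P⁺_proj(X,S,ℂ^ℓ)` of continuous unitarily invariant matrix valued kernels all
of whose scalar valued projections are strictly positive definite. -/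
def PplusProjMat {X : Type*} [TopologicalSpace X] (S : Set (X → X)) (ℓ : ℕ) :
    Set (X → X → Matrix (Fin ℓ) (Fin ℓ) ℂ) :=
  {K | (Continuous fun p : X × X => K p.1 p.2) ∧
       (∀ ψ ∈ S, ∀ x y : X, K (ψ x) (ψ y) = K x y) ∧
       ∀ v : Fin ℓ → ℂ, v ≠ 0 → IsSPDKer (projKer K v)}

/-! ### Auxiliary lemmas -/

private lemma sum_filter_lt {ℓ m : ℕ} (hm : m ≤ ℓ) (f : Fin ℓ → ℂ) :
    ∑ i ∈ Finset.univ.filter (fun i : Fin ℓ => (i:ℕ) < m), f i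
      = ∑ j : Fin m, f (Fin.castLE hm j) := by
  rw [show Finset.univ.filter (fun i : Fin ℓ => (i:ℕ) < m)
        = Finset.univ.image (Fin.castLE hm) from by
    ext i
    simp only [Finset.mem_filter, Finset.mem_univ, true_and, Finset.mem_image]
    exact ⟨fun h => ⟨⟨i, h⟩, by ext; rfl⟩, fun ⟨j, hj⟩ => hj ▸ j.2⟩]
  exact Finset.sum_image (fun a _ b _ h => Fin.castLE_injective hm h)

private lemma sum_split {ℓ m : ℕ} (hm : m ≤ ℓ) (f : Fin ℓ → ℂ) :
    ∑ i : Fin ℓ, f i = (∑ j : Fin m, f (Fin.castLE hm j)) +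
      ∑ i ∈ Finset.univ.filter (fun i : Fin ℓ => ¬ (i:ℕ) < m), f i := by
  rw [← Finset.sum_filter_add_sum_filter_not Finset.univ (fun i : Fin ℓ => (i:ℕ) < m) f,
      sum_filter_lt hm f]

private def blockM {m ℓ : ℕ} (A : Matrix (Fin m) (Fin m) ℂ) (a : ℂ) :
    Matrix (Fin ℓ) (Fin ℓ) ℂ :=
  fun i j => if hi : (i:ℕ) < m then (if hj : (j:ℕ) < m then A ⟨i, hi⟩ ⟨j, hj⟩ else 0)
    else (if i = j then a else 0)

private lemma cip_blockM {m ℓ : ℕ} (hm : m ≤ ℓ) (A : Matrix (Fin m) (Fin m) ℂ) (a : ℂ)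
    (w w' : Fin ℓ → ℂ) :
    cip ((blockM A a).mulVec w) w'
      = cip (A.mulVec (fun j => w (Fin.castLE hm j))) (fun j => w' (Fin.castLE hm j))
        + (∑ i ∈ Finset.univ.filter (fun i : Fin ℓ => ¬ (i:ℕ) < m),
            w i * (starRingEnd ℂ) (w' i)) * a := by
  unfold cip Matrix.mulVec dotProduct blockM
  rw [sum_split hm]
  congr 1
  · refine Finset.sum_congr rfl fun j₀ _ => ?_
    congr 1
    rw [sum_split hm]
    have hz : ∑ i ∈ Finset.univ.filter (fun i : Fin ℓ => ¬ (i:ℕ) < m),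
        (if hi : ((Fin.castLE hm j₀ : Fin ℓ):ℕ) < m then
          (if hj : (i:ℕ) < m then A ⟨(Fin.castLE hm j₀ : Fin ℓ), hi⟩ ⟨i, hj⟩ else 0)
         else (if (Fin.castLE hm j₀ : Fin ℓ) = i then a else 0)) * w i = 0 := by
      refine Finset.sum_eq_zero fun i hi => ?_
      have hi' : ¬ (i:ℕ) < m := (Finset.mem_filter.mp hi).2
      simp [Fin.coe_castLE, j₀.is_lt, dif_neg hi']
    rw [hz, add_zero]
    refine Finset.sum_congr rfl fun j₁ _ => ?_
    simp [Fin.coe_castLE, j₀.is_lt, j₁.is_lt]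
  · rw [Finset.sum_mul]
    refine Finset.sum_congr rfl fun i hi => ?_
    have hi' : ¬ (i:ℕ) < m := (Finset.mem_filter.mp hi).2
    have : ∀ j : Fin ℓ, (if h : (i:ℕ) < m then
        (if hj : (j:ℕ) < m then A ⟨i, h⟩ ⟨j, hj⟩ else 0)
        else (if i = j then a else 0)) * w j = (if i = j then a else 0) * w j := by
      intro j; rw [dif_neg hi']
    rw [Finset.sum_congr rfl fun j _ => this j]
    simp only [ite_mul, zero_mul, Finset.sum_ite_eq, Finset.mem_univ, if_true]
    ring

private lemma cip_smul {ι : Type*} [Fintype ι] (c d : ℂ) (v w : ι → ℂ) :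
    cip (c • v) (d • w) = c * (starRingEnd ℂ) d * cip v w := by
  simp only [cip, Pi.smul_apply, smul_eq_mul, map_mul, Finset.mul_sum]
  exact Finset.sum_congr rfl fun i _ => by ring

private lemma mul_conj_self_nonneg (z : ℂ) : 0 ≤ z * (starRingEnd ℂ) z := by
  rw [Complex.mul_conj]; exact_mod_cast Complex.normSq_nonneg z

private lemma mul_conj_self_pos {z : ℂ} (hz : z ≠ 0) : 0 < z * (starRingEnd ℂ) z := by
  rw [Complex.mul_conj]; exact_mod_cast Complex.normSq_pos.mpr hz

private lemma spd_pd {X : Type*} {k : X → X → ℂ} (h : IsSPDKer k) : IsPDKer k := by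
  intro n x hx c
  by_cases hc : ∃ μ, c μ ≠ 0
  · exact le_of_lt (h n x hx c hc)
  · push_neg at hc
    have : ∀ μ ∈ Finset.univ, ∑ ν : Fin n, c μ * (starRingEnd ℂ) (c ν) * k (x μ) (x ν) = 0 :=
      fun μ _ => Finset.sum_eq_zero fun ν _ => by rw [hc μ]; ring
    rw [Finset.sum_eq_zero this]

private lemma mat_subset_proj {X : Type*} [TopologicalSpace X] (S : Set (X → X)) (ℓ : ℕ) :
    PplusMat S ℓ ⊆ PplusProjMat S ℓ := by
  rintro K ⟨hc, hinv, hspd⟩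
  refine ⟨hc, hinv, fun v hv n x hx c hc0 => ?_⟩
  have hex : ∃ μ, (fun i => c μ • v) μ ≠ 0 := by
    obtain ⟨μ, hμ⟩ := hc0
    exact ⟨μ, by simp [smul_eq_zero, hμ, hv]⟩
  have h := hspd n x hx (fun μ => c μ • v) (by
    obtain ⟨μ, hμ⟩ := hc0
    exact ⟨μ, by simp [smul_eq_zero, hμ, hv]⟩)
  have heq : ∀ μ ν : Fin n,
      cip ((K (x μ) (x ν)).mulVec (c μ • v)) (c ν • v)
        = c μ * (starRingEnd ℂ) (c ν) * projKer K v (x μ) (x ν) := by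
    intro μ ν
    rw [Matrix.mulVec_smul, cip_smul]
    rfl
  calc (0:ℂ) < ∑ μ : Fin n, ∑ ν : Fin n,
        cip ((K (x μ) (x ν)).mulVec (c μ • v)) (c ν • v) := h
    _ = ∑ μ : Fin n, ∑ ν : Fin n,
        c μ * (starRingEnd ℂ) (c ν) * projKer K v (x μ) (x ν) :=
      Finset.sum_congr rfl fun μ _ => Finset.sum_congr rfl fun ν _ => heq μ ν

/-- If `P⁺(X,S)` is nonempty, then `P⁺_proj(X,S,ℂ^ℓ) = P⁺(X,S,ℂ^ℓ)` for a given
`ℓ ≥ 2` if and only if `P⁺_proj(X,S,ℂ^m) = P⁺(X,S,ℂ^m)` for every `m` with `2 ≤ m ≤ ℓ`. -/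
theorem stmt_5 {X : Type*} [TopologicalSpace X]
    (S : Set (X → X))
    (hScont : ∀ ψ ∈ S, Continuous ψ)
    (hSid : (id : X → X) ∈ S)
    (hScomp : ∀ φ ∈ S, ∀ ψ ∈ S, φ ∘ ψ ∈ S)
    (hne : ∃ k : X → X → ℂ,
      (Continuous fun p : X × X => k p.1 p.2) ∧
      (∀ ψ ∈ S, ∀ x y : X, k (ψ x) (ψ y) = k x y) ∧
      IsSPDKer k)
    (ℓ : ℕ) (hℓ : 2 ≤ ℓ) :
    PplusProjMat S ℓ = PplusMat S ℓ ↔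
      ∀ m : ℕ, 2 ≤ m → m ≤ ℓ → PplusProjMat S m = PplusMat S m := by
  obtain ⟨k, hkc, hkinv, hkspd⟩ := hne
  constructor
  · intro hEq m hm2 hmℓ
    refine Set.Subset.antisymm ?_ (mat_subset_proj S m)
    rintro K ⟨hKc, hKinv, hKproj⟩
    refine ⟨hKc, hKinv, ?_⟩
    -- the padded kernel
    set E : X → X → Matrix (Fin ℓ) (Fin ℓ) ℂ :=
      fun x y => blockM (K x y) (k x y) with hEdef
    -- E belongs to PplusProjMat S ℓ
    have hEmem : E ∈ PplusProjMat S ℓ := by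
      refine ⟨?_, ?_, ?_⟩
      · -- continuity
        apply continuous_matrix
        intro i j
        by_cases hi : (i:ℕ) < m
        · by_cases hj : (j:ℕ) < m
          · simpa [hEdef, blockM, dif_pos hi, dif_pos hj] using
              (hKc.matrix_elem ⟨i, hi⟩ ⟨j, hj⟩)
          · simp [hEdef, blockM, dif_pos hi, dif_neg hj, continuous_const]
        · by_cases hij : i = j
          · simpa [hEdef, blockM, dif_neg hi, if_pos hij] using hkc
          · simp [hEdef, blockM, dif_neg hi, if_neg hij, continuous_const]
      · -- invariance
        intro ψ hψ x y
        simp only [hEdef, hKinv ψ hψ, hkinv ψ hψ]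
      · -- projections are SPD
        intro w hw n x hx c hcex
        -- the truncated vector
        by_cases hv : (fun j => w (Fin.castLE hmℓ j)) = 0
        · -- then w is supported on the tail indices
          obtain ⟨i, hi⟩ : ∃ i, w i ≠ 0 := Function.ne_iff.mp hw
          have him : ¬ (i:ℕ) < m := by
            intro him
            have := congrFun hv ⟨(i:ℕ), him⟩
            simp only [Pi.zero_apply] at this
            have hci : Fin.castLE hmℓ ⟨(i:ℕ), him⟩ = i := Fin.ext rfl
            exact hi (hci ▸ this)
          have hC : 0 < ∑ i ∈ Finset.univ.filter (fun i : Fin ℓ => ¬ (i:ℕ) < m),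
              w i * (starRingEnd ℂ) (w i) := by
            refine Finset.sum_pos' (fun i _ => mul_conj_self_nonneg (w i)) ?_
            exact ⟨i, Finset.mem_filter.mpr ⟨Finset.mem_univ i, him⟩, mul_conj_self_pos hi⟩
          have hsum : ∑ μ : Fin n, ∑ ν : Fin n,
              c μ * (starRingEnd ℂ) (c ν) * projKer E w (x μ) (x ν)
              = (∑ i ∈ Finset.univ.filter (fun i : Fin ℓ => ¬ (i:ℕ) < m),
                  w i * (starRingEnd ℂ) (w i)) *
                ∑ μ : Fin n, ∑ ν : Fin n,
                  c μ * (starRingEnd ℂ) (c ν) * k (x μ) (x ν) := by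
            rw [Finset.mul_sum]
            refine Finset.sum_congr rfl fun μ _ => ?_
            rw [Finset.mul_sum]
            refine Finset.sum_congr rfl fun ν _ => ?_
            show c μ * (starRingEnd ℂ) (c ν) * cip ((blockM (K (x μ) (x ν)) (k (x μ) (x ν))).mulVec w) w = _
            rw [cip_blockM hmℓ, hv]
            have : cip ((K (x μ) (x ν)).mulVec (0 : Fin m → ℂ)) (0 : Fin m → ℂ) = 0 := by
              simp [cip]
            rw [this, zero_add]
            ring
          rw [hsum]
          exact mul_pos hC (hkspd n x hx c hcex)
        · -- the truncated vector is nonzero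
          have hsum : ∑ μ : Fin n, ∑ ν : Fin n,
              c μ * (starRingEnd ℂ) (c ν) * projKer E w (x μ) (x ν)
              = (∑ μ : Fin n, ∑ ν : Fin n, c μ * (starRingEnd ℂ) (c ν) *
                  projKer K (fun j => w (Fin.castLE hmℓ j)) (x μ) (x ν))
                + (∑ i ∈ Finset.univ.filter (fun i : Fin ℓ => ¬ (i:ℕ) < m),
                    w i * (starRingEnd ℂ) (w i)) *
                  ∑ μ : Fin n, ∑ ν : Fin n,
                    c μ * (starRingEnd ℂ) (c ν) * k (x μ) (x ν) := by
            rw [Finset.mul_sum, ← Finset.sum_add_distrib]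
            refine Finset.sum_congr rfl fun μ _ => ?_
            rw [Finset.mul_sum, ← Finset.sum_add_distrib]
            refine Finset.sum_congr rfl fun ν _ => ?_
            show c μ * (starRingEnd ℂ) (c ν) * cip ((blockM (K (x μ) (x ν)) (k (x μ) (x ν))).mulVec w) w = _
            rw [cip_blockM hmℓ]
            show _ = c μ * (starRingEnd ℂ) (c ν) *
              cip ((K (x μ) (x ν)).mulVec (fun j => w (Fin.castLE hmℓ j)))
                (fun j => w (Fin.castLE hmℓ j)) + _
            ring
          rw [hsum]
          refine add_pos_of_pos_of_nonneg (hKproj _ hv n x hx c hcex) ?_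
          exact mul_nonneg
            (Finset.sum_nonneg fun i _ => mul_conj_self_nonneg (w i))
            (spd_pd hkspd n x hx c)
    rw [hEq] at hEmem
    obtain ⟨-, -, hEspd⟩ := hEmem
    -- deduce strict positive definiteness of K
    intro n x hx u hu
    set upad : Fin n → Fin ℓ → ℂ :=
      fun μ i => if hi : (i:ℕ) < m then u μ ⟨i, hi⟩ else 0 with hupad
    have hpadex : ∃ μ, upad μ ≠ 0 := by
      obtain ⟨μ, hμ⟩ := hu
      obtain ⟨j, hj⟩ : ∃ j, u μ j ≠ 0 := Function.ne_iff.mp hμ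
      refine ⟨μ, fun h0 => hj ?_⟩
      have := congrFun h0 (Fin.castLE hmℓ j)
      simpa [hupad, Fin.coe_castLE, j.is_lt] using this
    have hpt : ∀ μ ν : Fin n,
        cip ((E (x μ) (x ν)).mulVec (upad μ)) (upad ν)
          = cip ((K (x μ) (x ν)).mulVec (u μ)) (u ν) := by
      intro μ ν
      show cip ((blockM (K (x μ) (x ν)) (k (x μ) (x ν))).mulVec (upad μ)) (upad ν) = _
      rw [cip_blockM hmℓ]
      have hres : ∀ (ρ : Fin n), (fun j => upad ρ (Fin.castLE hmℓ j)) = u ρ := by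
        intro ρ
        funext j
        simp [hupad, Fin.coe_castLE, j.is_lt]
      have hzero : ∑ i ∈ Finset.univ.filter (fun i : Fin ℓ => ¬ (i:ℕ) < m),
          upad μ i * (starRingEnd ℂ) (upad ν i) = 0 := by
        refine Finset.sum_eq_zero fun i hi => ?_
        have hi' : ¬ (i:ℕ) < m := (Finset.mem_filter.mp hi).2
        simp [hupad, dif_neg hi']
      rw [hres μ, hres ν, hzero, zero_mul, add_zero]
    calc (0:ℂ) < ∑ μ : Fin n, ∑ ν : Fin n,
        cip ((E (x μ) (x ν)).mulVec (upad μ)) (upad ν) := hEspd n x hx upad hpadex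
      _ = ∑ μ : Fin n, ∑ ν : Fin n,
          cip ((K (x μ) (x ν)).mulVec (u μ)) (u ν) :=
        Finset.sum_congr rfl fun μ _ => Finset.sum_congr rfl fun ν _ => hpt μ ν
  · intro h
    exact h ℓ hℓ le_rfl
end

section
/- Let G be a locally compact Abelian group that is non torsion (i.e. contains an element of infinite order) and such that there exists a continuous translation invariant strictly positive definite scalar valued kernel on G (i.e. P⁺(G,ℂ) is nonempty). Then for every ℓ ≥ 2 the inclusion P⁺(G,ℂ^ℓ) ⊆ P⁺_proj(G,ℂ^ℓ) is strict. -/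
open scoped ComplexOrder

/-!
For a scalar kernel `k` and shifts `s : Fin ℓ → G` put `K(x,y)ⱼᵢ = k(x sᵢ, y sⱼ)`. The quadratic
form of `K` at points `x_μ` and vectors `v_μ` is the quadratic form of `k` at the finitely supported
coefficient function `∑ v_μ(i) δ_{x_μ sᵢ}`, so it is positive exactly when that function is nonzero.
It vanishes for the points `s₀, s₁` with vectors `e₁, -e₀`, because `s₀ s₁ = s₁ s₀`; so `K` is not
strictly positive definite. For a projection `K_v` with coefficients `c_μ`, the coefficient function
is the product `(∑ c_μ δ_{x_μ}) * (∑ vᵢ δ_{sᵢ})` in the group algebra `ℂ[G]`. With `sᵢ = gⁱ` and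
`g` of infinite order the second factor lives in `ℂ[⟨g⟩] ≅ ℂ[ℤ]`, and unique products in `ℤ` show
that the product of two nonzero such factors is nonzero.
-/
theorem exists_uniqueMul_of_subset_zpowers {G : Type*} [Group G] {g : G}
    (hg : ¬ IsOfFinOrder g) {A B : Finset G} (hA : A.Nonempty) (hB : B.Nonempty)
    (hBg : ∀ b ∈ B, b ∈ Subgroup.zpowers g) :
    ∃ a0 ∈ A, ∃ b0 ∈ B, UniqueMul A B a0 b0 := by
  classical
  have hinj : Function.Injective (fun n : ℤ => g ^ n) :=
    injective_zpow_iff_not_isOfFinOrder.mpr hg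
  obtain ⟨a₁, ha₁⟩ := hA
  -- Pull `B` and the part of `A` in the coset `a₁ ⟨g⟩` back to `ℤ`, which has unique sums.
  let A' := A.preimage (fun m : ℤ => a₁ * g ^ m) ((mul_right_injective a₁).comp hinj).injOn
  let B' := B.preimage (fun n : ℤ => g ^ n) hinj.injOn
  have hA' : A'.Nonempty := ⟨0, by simpa [A'] using ha₁⟩
  have hB' : B'.Nonempty := by
    obtain ⟨b, hb⟩ := hB
    obtain ⟨n, rfl⟩ := Subgroup.mem_zpowers_iff.mp (hBg b hb)
    exact ⟨n, by simpa [B'] using hb⟩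
  obtain ⟨m₀, hm₀, n₀, hn₀, huniq⟩ := UniqueSums.uniqueAdd_of_nonempty hA' hB'
  refine ⟨a₁ * g ^ m₀, by simpa [A'] using hm₀, g ^ n₀, by simpa [B'] using hn₀, ?_⟩
  intro a b ha hb hab
  obtain ⟨n, rfl⟩ := Subgroup.mem_zpowers_iff.mp (hBg b hb)
  have ha_eq : a = a₁ * g ^ (m₀ + n₀ - n) := by
    rw [zpow_sub, zpow_add, ← mul_assoc, ← mul_assoc, ← hab, mul_inv_cancel_right]
  obtain ⟨hm, hn⟩ := huniq (a := m₀ + n₀ - n) (b := n)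
    (by simpa [A', ← ha_eq] using ha) (by simpa [B'] using hb) (by ring)
  rw [ha_eq, hm, hn]
  exact ⟨rfl, rfl⟩

theorem MonoidAlgebra.mul_ne_zero_of_support_subset_zpowers {R G : Type*} [Semiring R]
    [NoZeroDivisors R] [Group G] {g : G} (hg : ¬ IsOfFinOrder g) {x y : MonoidAlgebra R G}
    (hx : x ≠ 0) (hy : y ≠ 0) (hyg : ∀ b ∈ y.coeff.support, b ∈ Subgroup.zpowers g) :
    x * y ≠ 0 := by
  rw [ne_eq, ← MonoidAlgebra.coeff_eq_zero, ← ne_eq, ← Finsupp.support_nonempty_iff] at hx hy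
  obtain ⟨a₀, ha₀, b₀, hb₀, huniq⟩ := exists_uniqueMul_of_subset_zpowers hg hx hy hyg
  intro hxy
  have hcoeff := MonoidAlgebra.coeff_mul_mul_of_uniqueMul huniq
  rw [hxy, MonoidAlgebra.coeff_zero, Finsupp.zero_apply] at hcoeff
  exact mul_ne_zero (Finsupp.mem_support_iff.mp ha₀) (Finsupp.mem_support_iff.mp hb₀) hcoeff.symm

theorem MonoidAlgebra.sum_single_ne_zero {R G ι : Type*} [Semiring R] [Fintype ι] {x : ι → G}
    (hx : Function.Injective x) {c : ι → R} (hc : c ≠ 0) :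
    ∑ i, MonoidAlgebra.single (x i) (c i) ≠ 0 := by
  classical
  obtain ⟨i, hi⟩ := Function.ne_iff.mp hc
  intro h
  have hcoeff := congr(($h).coeff (x i))
  simp [MonoidAlgebra.coeff_sum, MonoidAlgebra.coeff_single, Finsupp.single_apply,
    hx.eq_iff] at hcoeff
  exact hi hcoeff

noncomputable def kerQuadForm {X : Type*} (k : X → X → ℂ) (f : X →₀ ℂ) : ℂ :=
  f.sum fun p a => f.sum fun q b => a * starRingEnd ℂ b * k p q

theorem kerQuadForm_sum_single {X ι : Type*} [Fintype ι] (k : X → X → ℂ) (y : ι → X) (d : ι → ℂ) :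
    kerQuadForm k (∑ a, Finsupp.single (y a) (d a))
      = ∑ a, ∑ b, d a * starRingEnd ℂ (d b) * k (y a) (y b) := by
  have hsum : ∀ (h : X → ℂ → ℂ), (∀ p, h p 0 = 0) → (∀ p a b, h p (a + b) = h p a + h p b) →
      (∑ a, Finsupp.single (y a) (d a)).sum h = ∑ a, h (y a) (d a) := fun h h0 hadd => by
    rw [← Finsupp.sum_finsetSum_index h0 hadd]
    exact Finset.sum_congr rfl fun a _ => Finsupp.sum_single_index (h0 _)
  unfold kerQuadForm
  rw [hsum _ (fun p => by simp) (fun p a a' => by simp [add_mul])]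
  refine Finset.sum_congr rfl fun a _ => ?_
  rw [hsum _ (fun q => by simp) (fun q b b' => by simp [mul_add, add_mul])]

theorem IsSPDKer.kerQuadForm_pos {X : Type*} {k : X → X → ℂ} (hk : IsSPDKer k) {f : X →₀ ℂ}
    (hf : f ≠ 0) : 0 < kerQuadForm k f := by
  let e := f.support.equivFin
  let x : Fin f.support.card → X := fun μ => e.symm μ
  have hx : Function.Injective x := Subtype.val_injective.comp e.symm.injective
  have hsum : ∀ h : X → ℂ, ∑ μ, h (x μ) = ∑ p ∈ f.support, h p := fun h =>
    (e.symm.sum_comp fun p : f.support => h p).trans (Finset.sum_coe_sort f.support h)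
  obtain ⟨p, hp⟩ := Finsupp.support_nonempty_iff.mpr hf
  have hpos := hk _ x hx (fun μ => f (x μ)) ⟨e ⟨p, hp⟩, by simpa [x] using hp⟩
  simp only [kerQuadForm, Finsupp.sum, ← hsum]
  exact hpos

theorem sum_mul_conj_projKer {X ι : Type*} [Fintype ι] {ℓ : ℕ}
    (K : X → X → Matrix (Fin ℓ) (Fin ℓ) ℂ) (v : Fin ℓ → ℂ) (x : ι → X) (c : ι → ℂ) :
    ∑ μ, ∑ ν, c μ * starRingEnd ℂ (c ν) * projKer K v (x μ) (x ν)
      = ∑ μ, ∑ ν, cip ((K (x μ) (x ν)).mulVec (c μ • v)) (c ν • v) := by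
  refine Finset.sum_congr rfl fun μ _ => Finset.sum_congr rfl fun ν _ => ?_
  simp only [projKer, cip, Matrix.mulVec_smul, Finset.mul_sum, Pi.smul_apply, smul_eq_mul,
    map_mul]
  exact Finset.sum_congr rfl fun i _ => by ring

noncomputable def shiftKer {G : Type*} [Mul G] {ℓ : ℕ} (k : G → G → ℂ) (s : Fin ℓ → G) :
    G → G → Matrix (Fin ℓ) (Fin ℓ) ℂ :=
  fun x y => Matrix.of fun j i => k (x * s i) (y * s j)

section shiftKer

variable {G : Type*} {ℓ : ℕ} {k : G → G → ℂ}

theorem continuous_shiftKer [TopologicalSpace G] [Mul G] [ContinuousMul G]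
    (hk : Continuous fun p : G × G => k p.1 p.2) (s : Fin ℓ → G) :
    Continuous fun p : G × G => shiftKer k s p.1 p.2 :=
  continuous_matrix fun _ _ => hk.comp <|
    (continuous_fst.mul continuous_const).prodMk (continuous_snd.mul continuous_const)

theorem shiftKer_mul_mul [Semigroup G] (hk : ∀ g x y : G, k (g * x) (g * y) = k x y)
    (s : Fin ℓ → G) (g x y : G) : shiftKer k s (g * x) (g * y) = shiftKer k s x y := by
  ext j i
  simp only [shiftKer, Matrix.of_apply, mul_assoc, hk]

theorem sum_cip_shiftKer [Mul G] {ι : Type*} [Fintype ι] (s : Fin ℓ → G) (x : ι → G)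
    (v : ι → Fin ℓ → ℂ) :
    ∑ μ, ∑ ν, cip ((shiftKer k s (x μ) (x ν)).mulVec (v μ)) (v ν)
      = kerQuadForm k (∑ a : ι × Fin ℓ, Finsupp.single (x a.1 * s a.2) (v a.1 a.2)) := by
  rw [kerQuadForm_sum_single, Fintype.sum_prod_type]
  refine Finset.sum_congr rfl fun μ _ => ?_
  simp only [Fintype.sum_prod_type, cip, shiftKer, Matrix.mulVec, dotProduct, Matrix.of_apply,
    Finset.sum_mul]
  refine (Finset.sum_congr rfl fun ν _ => Finset.sum_comm).trans (Finset.sum_comm.trans ?_)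
  exact Finset.sum_congr rfl fun _ _ => Finset.sum_congr rfl fun _ _ =>
    Finset.sum_congr rfl fun _ _ => by ring

theorem not_isSPDMat_shiftKer [CommMagma G] {s : Fin ℓ → G} {i j : Fin ℓ} (hij : s i ≠ s j) :
    ¬ IsSPDMat (shiftKer k s) := by
  intro hspd
  let x : Fin 2 → G := ![s i, s j]
  let w : Fin 2 → Fin ℓ → ℂ := ![Pi.single j 1, -Pi.single i 1]
  have hx : Function.Injective x := by
    intro a b
    fin_cases a <;> fin_cases b <;> simp [x, hij, hij.symm]
  have hw : ∃ μ, w μ ≠ 0 := ⟨0, by simp [w]⟩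
  have hzero : ∑ a : Fin 2 × Fin ℓ, Finsupp.single (x a.1 * s a.2) (w a.1 a.2) = 0 := by
    simp [x, w, Fintype.sum_prod_type, Pi.single_apply, apply_ite (Finsupp.single _), mul_comm]
  have hpos := hspd 2 x hx w hw
  rw [sum_cip_shiftKer, hzero, kerQuadForm, Finsupp.sum_zero_index] at hpos
  exact lt_irrefl _ hpos

theorem isSPDKer_projKer_shiftKer [Group G] (hk : IsSPDKer k) {g : G} (hg : ¬ IsOfFinOrder g)
    {s : Fin ℓ → G} (hs : Function.Injective s) (hsg : ∀ i, s i ∈ Subgroup.zpowers g)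
    {v : Fin ℓ → ℂ} (hv : v ≠ 0) : IsSPDKer (projKer (shiftKer k s) v) := by
  intro n x hx c hc
  let P : MonoidAlgebra ℂ G := ∑ μ, MonoidAlgebra.single (x μ) (c μ)
  let Q : MonoidAlgebra ℂ G := ∑ i, MonoidAlgebra.single (s i) (v i)
  have hPQ : (P * Q).coeff
      = ∑ a : Fin n × Fin ℓ, Finsupp.single (x a.1 * s a.2) (c a.1 * v a.2) := by
    simp only [P, Q, Finset.sum_mul_sum, MonoidAlgebra.single_mul_single,
      MonoidAlgebra.coeff_sum, MonoidAlgebra.coeff_single, Fintype.sum_prod_type]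
  have hP : P ≠ 0 := MonoidAlgebra.sum_single_ne_zero hx (Function.ne_iff.mpr hc)
  have hQ : Q ≠ 0 := MonoidAlgebra.sum_single_ne_zero hs hv
  have hQg : ∀ b ∈ Q.coeff.support, b ∈ Subgroup.zpowers g := by
    classical
    intro b hb
    rw [MonoidAlgebra.coeff_sum] at hb
    obtain ⟨i, -, hi⟩ := Finset.mem_biUnion.mp (Finsupp.support_finsetSum hb)
    rw [MonoidAlgebra.coeff_single] at hi
    rw [Finset.mem_singleton.mp (Finsupp.support_single_subset hi)]
    exact hsg i
  rw [sum_mul_conj_projKer, sum_cip_shiftKer]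
  simp only [Pi.smul_apply, smul_eq_mul]
  rw [← hPQ]
  exact hk.kerQuadForm_pos <| MonoidAlgebra.coeff_eq_zero.not.mpr <|
    MonoidAlgebra.mul_ne_zero_of_support_subset_zpowers hg hP hQ hQg

end shiftKer

theorem stmt_7_general {G : Type*} [CommGroup G] [TopologicalSpace G] [IsTopologicalGroup G]
    (hnt : ∃ g : G, ¬ IsOfFinOrder g)
    (hne : ∃ k : G → G → ℂ,
      (Continuous fun p : G × G => k p.1 p.2) ∧
      (∀ g x y : G, k (g * x) (g * y) = k x y) ∧
      IsSPDKer k) :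
    ∀ ℓ : ℕ, 2 ≤ ℓ →
      ∃ K : G → G → Matrix (Fin ℓ) (Fin ℓ) ℂ,
        (Continuous fun p : G × G => K p.1 p.2) ∧
        (∀ g x y : G, K (g * x) (g * y) = K x y) ∧
        (∀ v : Fin ℓ → ℂ, v ≠ 0 → IsSPDKer (projKer K v)) ∧
        ¬ IsSPDMat K := by
  obtain ⟨g, hg⟩ := hnt
  obtain ⟨k, hk_cont, hk_inv, hk_spd⟩ := hne
  intro ℓ hℓ
  let s : Fin ℓ → G := fun i => g ^ (i : ℕ)
  have hs : Function.Injective s :=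
    (injective_pow_iff_not_isOfFinOrder.mpr hg).comp Fin.val_injective
  have h01 : s ⟨0, by omega⟩ ≠ s ⟨1, by omega⟩ := hs.ne (by simp)
  exact ⟨shiftKer k s, continuous_shiftKer hk_cont s, shiftKer_mul_mul hk_inv s,
    fun v hv => isSPDKer_projKer_shiftKer hk_spd hg hs (fun i => Subgroup.npow_mem_zpowers g i) hv,
    not_isSPDMat_shiftKer h01⟩

/-- Let `G` be a locally compact Abelian group that is non torsion and such that
`P⁺(G,ℂ)` is nonempty (there is a continuous translation invariant strictly positive definite
scalar kernel).  Then for every `ℓ ≥ 2` the inclusion `P⁺(G,ℂ^ℓ) ⊆ P⁺_proj(G,ℂ^ℓ)` is strict. -/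
theorem stmt_7 {G : Type*} [CommGroup G] [TopologicalSpace G] [IsTopologicalGroup G]
    [LocallyCompactSpace G]
    (hnt : ∃ g : G, ¬ IsOfFinOrder g)
    (hne : ∃ k : G → G → ℂ,
      (Continuous fun p : G × G => k p.1 p.2) ∧
      (∀ g x y : G, k (g * x) (g * y) = k x y) ∧
      IsSPDKer k) :
    ∀ ℓ : ℕ, 2 ≤ ℓ →
      ∃ K : G → G → Matrix (Fin ℓ) (Fin ℓ) ℂ,
        (Continuous fun p : G × G => K p.1 p.2) ∧
        (∀ g x y : G, K (g * x) (g * y) = K x y) ∧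
        (∀ v : Fin ℓ → ℂ, v ≠ 0 → IsSPDKer (projKer K v)) ∧
        ¬ IsSPDMat K :=
  stmt_7_general hnt hne
end

section
/- Let q₁,…,q_l ∈ {2,3,…} and G := ℤ_{q₁} × ⋯ × ℤ_{q_l}. Then P⁺(G,ℂ) is nonempty, and for every ℓ ≥ 2 one has P⁺_proj(G,ℂ^ℓ) = P⁺(G,ℂ^ℓ): a continuous translation invariant matrix valued kernel on G all of whose scalar valued projections are strictly positive definite is itself strictly positive definite. -/
open scoped ComplexOrder

open Finset

lemma cip_zero_left {ι : Type*} [Fintype ι] (w : ι → ℂ) : cip 0 w = 0 := by simp [cip]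
lemma cip_zero_right {ι : Type*} [Fintype ι] (v : ι → ℂ) : cip v 0 = 0 := by simp [cip]
lemma cip_sum_left {ι κ : Type*} [Fintype ι] (s : Finset κ) (f : κ → ι → ℂ) (w : ι → ℂ) :
    cip (∑ t ∈ s, f t) w = ∑ t ∈ s, cip (f t) w := by
  simp [cip, Finset.sum_mul, Finset.sum_apply]
  exact Finset.sum_comm
lemma cip_sum_right {ι κ : Type*} [Fintype ι] (s : Finset κ) (v : ι → ℂ) (g : κ → ι → ℂ) :
    cip v (∑ t ∈ s, g t) = ∑ t ∈ s, cip v (g t) := by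
  simp [cip, Finset.mul_sum, Finset.sum_apply, map_sum]
  exact Finset.sum_comm
lemma mulVec_sum {ℓ : ℕ} {κ : Type*} (s : Finset κ) (M : Matrix (Fin ℓ) (Fin ℓ) ℂ)
    (f : κ → Fin ℓ → ℂ) : M.mulVec (∑ t ∈ s, f t) = ∑ t ∈ s, M.mulVec (f t) := by
  ext i
  simp [Matrix.mulVec, dotProduct, Finset.mul_sum, Finset.sum_apply]
  exact Finset.sum_comm
lemma sum4_swap {α β γ δ : Type*} [Fintype α] [Fintype β] [Fintype γ] [Fintype δ]
    (f : α → β → γ → δ → ℂ) :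
    ∑ a, ∑ b, ∑ c, ∑ d, f a b c d = ∑ c, ∑ d, ∑ a, ∑ b, f a b c d := by
  calc ∑ a, ∑ b, ∑ c, ∑ d, f a b c d
      = ∑ a, ∑ c, ∑ b, ∑ d, f a b c d :=
        Finset.sum_congr rfl fun a _ => Finset.sum_comm
    _ = ∑ c, ∑ a, ∑ b, ∑ d, f a b c d := Finset.sum_comm
    _ = ∑ c, ∑ a, ∑ d, ∑ b, f a b c d :=
        Finset.sum_congr rfl fun c _ => Finset.sum_congr rfl fun a _ => Finset.sum_comm
    _ = ∑ c, ∑ d, ∑ a, ∑ b, f a b c d :=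
        Finset.sum_congr rfl fun c _ => Finset.sum_comm

noncomputable def QF {X : Type*} [Fintype X] {ℓ : ℕ}
    (K : X → X → Matrix (Fin ℓ) (Fin ℓ) ℂ) (A B : X → Fin ℓ → ℂ) : ℂ :=
  ∑ z, ∑ w, cip ((K z w).mulVec (A z)) (B w)

noncomputable def Vpad {X : Type*} [DecidableEq X] {ℓ n : ℕ}
    (x : Fin n → X) (v : Fin n → Fin ℓ → ℂ) : X → Fin ℓ → ℂ :=
  fun z => ∑ μ, if x μ = z then v μ else 0

lemma Vpad_apply {X : Type*} [DecidableEq X] {ℓ n : ℕ} {x : Fin n → X}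
    (hx : Function.Injective x) (v : Fin n → Fin ℓ → ℂ) (μ₀ : Fin n) :
    Vpad x v (x μ₀) = v μ₀ := by
  unfold Vpad
  simp [hx.eq_iff]

lemma pad_eq {X : Type*} [Fintype X] [DecidableEq X] {ℓ n : ℕ}
    (K : X → X → Matrix (Fin ℓ) (Fin ℓ) ℂ) (x : Fin n → X) (v : Fin n → Fin ℓ → ℂ) :
    QF K (Vpad x v) (Vpad x v)
      = ∑ μ, ∑ ν, cip ((K (x μ) (x ν)).mulVec (v μ)) (v ν) := by
  calc QF K (Vpad x v) (Vpad x v)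
      = ∑ z, ∑ w, ∑ μ, ∑ ν,
          if x μ = z then (if x ν = w then cip ((K z w).mulVec (v μ)) (v ν) else 0) else 0 := by
        refine Finset.sum_congr rfl fun z _ => Finset.sum_congr rfl fun w _ => ?_
        show cip ((K z w).mulVec (∑ μ, if x μ = z then v μ else 0))
            (∑ ν, if x ν = w then v ν else 0) = _
        rw [mulVec_sum, cip_sum_left]
        refine Finset.sum_congr rfl fun μ _ => ?_
        rw [cip_sum_right]
        refine Finset.sum_congr rfl fun ν _ => ?_
        by_cases h1 : x μ = z <;> by_cases h2 : x ν = w <;>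
          simp [h1, h2, cip_zero_left, cip_zero_right]
    _ = ∑ μ, ∑ ν, ∑ z, ∑ w,
          if x μ = z then (if x ν = w then cip ((K z w).mulVec (v μ)) (v ν) else 0) else 0 :=
        sum4_swap _
    _ = ∑ μ, ∑ ν, cip ((K (x μ) (x ν)).mulVec (v μ)) (v ν) := by
        refine Finset.sum_congr rfl fun μ _ => Finset.sum_congr rfl fun ν _ => ?_
        rw [Finset.sum_congr rfl fun z (_ : z ∈ univ) =>
          show (∑ w, if x μ = z then (if x ν = w then cip ((K z w).mulVec (v μ)) (v ν) else 0) else 0)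
            = if x μ = z then (∑ w, if x ν = w then cip ((K z w).mulVec (v μ)) (v ν) else 0) else 0
          from by by_cases h : x μ = z <;> simp [h]]
        rw [Finset.sum_ite_eq univ (x μ)
          (fun z => ∑ w, if x ν = w then cip ((K z w).mulVec (v μ)) (v ν) else 0)]
        simp

lemma cip_smul_left {ι : Type*} [Fintype ι] (a : ℂ) (v w : ι → ℂ) :
    cip (a • v) w = a * cip v w := by
  simp [cip, Finset.mul_sum, mul_assoc]

lemma cip_smul_right {ι : Type*} [Fintype ι] (a : ℂ) (v w : ι → ℂ) :
    cip v (a • w) = (starRingEnd ℂ) a * cip v w := by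
  simp only [cip, Finset.mul_sum, Pi.smul_apply, smul_eq_mul, map_mul]
  exact Finset.sum_congr rfl fun i _ => by ring

lemma cip_mulVec_sum_sum {ℓ : ℕ} (M : Matrix (Fin ℓ) (Fin ℓ) ℂ) {κ κ' : Type*}
    [Fintype κ] [Fintype κ'] (a : κ → ℂ) (b : κ' → ℂ)
    (U : κ → Fin ℓ → ℂ) (V : κ' → Fin ℓ → ℂ) :
    cip (M.mulVec (∑ t, a t • U t)) (∑ s, b s • V s)
      = ∑ t, ∑ s, a t * (starRingEnd ℂ) (b s) * cip (M.mulVec (U t)) (V s) := by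
  rw [mulVec_sum, cip_sum_left]
  refine Finset.sum_congr rfl fun t _ => ?_
  rw [cip_sum_right]
  refine Finset.sum_congr rfl fun s _ => ?_
  rw [Matrix.mulVec_smul, cip_smul_left, cip_smul_right]
  ring

lemma cip_smul_smul {ι : Type*} [Fintype ι] (a b : ℂ) (v w : ι → ℂ) :
    cip (a • v) (b • w) = a * (starRingEnd ℂ) b * cip v w := by
  rw [cip_smul_left, cip_smul_right]; ring

lemma key {G : Type*} [AddCommGroup G] [Fintype G] [DecidableEq G] {ℓ : ℕ}
    (e : G → G → ℂ)
    (he_add : ∀ χ x y, e χ (x + y) = e χ x * e χ y)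
    (he_symm : ∀ χ x, e χ x = e x χ)
    (he_conj : ∀ χ x, (starRingEnd ℂ) (e χ x) = e χ (-x))
    (he_zero : ∀ χ, e χ 0 = 1)
    (he_sum : ∀ χ : G, χ ≠ 0 → ∑ x, e χ x = 0)
    (K : G → G → Matrix (Fin ℓ) (Fin ℓ) ℂ)
    (hTI : ∀ g x y, K (g + x) (g + y) = K x y)
    (hproj : ∀ u : Fin ℓ → ℂ, u ≠ 0 → ∀ c : G → ℂ, (∃ z, c z ≠ 0) →
      0 < ∑ z, ∑ w, c z * (starRingEnd ℂ) (c w) * cip ((K z w).mulVec u) u)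
    (W : G → Fin ℓ → ℂ) (hW : W ≠ 0) : 0 < QF K W W := by
  classical
  have he_mul_conj : ∀ χ χ' w, e χ w * (starRingEnd ℂ) (e χ' w) = e (χ - χ') w := by
    intro χ χ' w
    rw [he_symm χ' w, he_conj, he_symm χ w, ← he_add, ← sub_eq_add_neg]
    exact (he_symm _ _).symm
  set N : ℂ := (Fintype.card G : ℂ) with hN
  have hN0 : N ≠ 0 := Nat.cast_ne_zero.mpr Fintype.card_ne_zero
  set u : G → Fin ℓ → ℂ := fun χ => ∑ y, (starRingEnd ℂ) (e χ y) • W y with hu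
  have hinv : ∀ z, ∑ χ, e χ z • u χ = N • W z := by
    intro z
    calc ∑ χ, e χ z • u χ
        = ∑ χ, ∑ y, (e χ z * (starRingEnd ℂ) (e χ y)) • W y := by
          refine Finset.sum_congr rfl fun χ _ => ?_
          rw [hu, Finset.smul_sum]
          exact Finset.sum_congr rfl fun y _ => (smul_smul _ _ _)
      _ = ∑ y, (∑ χ, e χ z * (starRingEnd ℂ) (e χ y)) • W y := by
          rw [Finset.sum_comm]
          exact Finset.sum_congr rfl fun y _ => (Finset.sum_smul).symm
      _ = ∑ y, (∑ χ, e (z - y) χ) • W y := by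
          refine Finset.sum_congr rfl fun y _ => ?_
          congr 1
          refine Finset.sum_congr rfl fun χ _ => ?_
          rw [he_symm χ z, he_symm χ y, he_mul_conj]
      _ = ∑ y, (if z = y then N • W y else 0) := by
          refine Finset.sum_congr rfl fun y _ => ?_
          by_cases h : z = y
          · subst h
            rw [if_pos rfl, sub_self]
            congr 1
            calc ∑ χ, e 0 χ = ∑ χ : G, (1 : ℂ) :=
                  Finset.sum_congr rfl fun χ _ => by rw [← he_symm, he_zero]
              _ = N := by simp [hN]
          · rw [if_neg h, he_sum _ (sub_ne_zero.mpr h), zero_smul]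
      _ = N • W z := by rw [Finset.sum_ite_eq]; simp
  have hWz : ∀ z, W z = N⁻¹ • ∑ χ, e χ z • u χ := fun z => by
    rw [hinv z, smul_smul, inv_mul_cancel₀ hN0, one_smul]
  obtain ⟨χ₀, hχ₀⟩ : ∃ χ, u χ ≠ 0 := by
    by_contra h
    push_neg at h
    apply hW
    funext z
    rw [hWz z]
    simp [h]
  have hconjNinv : (starRingEnd ℂ) N⁻¹ = N⁻¹ := by simp [hN]
  set D : G → G → ℂ := fun χ χ' => ∑ z, ∑ w,
    e χ z * (starRingEnd ℂ) (e χ' w) * cip ((K z w).mulVec (u χ)) (u χ') with hD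
  have hexpand : QF K W W = N⁻¹ * (N⁻¹ * ∑ χ, ∑ χ', D χ χ') := by
    calc QF K W W = ∑ z, ∑ w, cip ((K z w).mulVec (W z)) (W w) := rfl
      _ = ∑ z, ∑ w, N⁻¹ * (N⁻¹ * ∑ χ, ∑ χ',
            e χ z * (starRingEnd ℂ) (e χ' w) * cip ((K z w).mulVec (u χ)) (u χ')) := by
          refine Finset.sum_congr rfl fun z _ => Finset.sum_congr rfl fun w _ => ?_
          rw [hWz z, hWz w, Matrix.mulVec_smul, cip_smul_left, cip_smul_right,
            hconjNinv, cip_mulVec_sum_sum]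
      _ = N⁻¹ * (N⁻¹ * ∑ z, ∑ w, ∑ χ, ∑ χ',
            e χ z * (starRingEnd ℂ) (e χ' w) * cip ((K z w).mulVec (u χ)) (u χ')) := by
          simp only [← Finset.mul_sum]
      _ = N⁻¹ * (N⁻¹ * ∑ χ, ∑ χ', D χ χ') := by rw [sum4_swap]
  have hK0 : ∀ z w, K z w = K (z - w) 0 := by
    intro z w
    have h := hTI w (z - w) 0
    rwa [add_sub_cancel, add_zero] at h
  have hcross : ∀ χ χ', χ ≠ χ' → D χ χ' = 0 := by
    intro χ χ' hne
    have hfact : D χ χ' = (∑ w, e (χ - χ') w) *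
        ∑ d, e χ d * cip ((K d 0).mulVec (u χ)) (u χ') := by
      calc D χ χ' = ∑ w, ∑ z,
            e χ z * (starRingEnd ℂ) (e χ' w) * cip ((K z w).mulVec (u χ)) (u χ') := by
            rw [hD]; exact Finset.sum_comm
        _ = ∑ w, (e χ w * (starRingEnd ℂ) (e χ' w)) *
              ∑ d, e χ d * cip ((K d 0).mulVec (u χ)) (u χ') := by
            refine Finset.sum_congr rfl fun w _ => ?_
            rw [Finset.mul_sum,
              ← Equiv.sum_comp (Equiv.addLeft w) (fun z =>
                e χ z * (starRingEnd ℂ) (e χ' w) * cip ((K z w).mulVec (u χ)) (u χ'))]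
            refine Finset.sum_congr rfl fun d _ => ?_
            simp only [Equiv.coe_addLeft]
            rw [hK0 (w + d) w, add_sub_cancel_left, he_add]
            ring
        _ = (∑ w, e (χ - χ') w) * ∑ d, e χ d * cip ((K d 0).mulVec (u χ)) (u χ') := by
            rw [Finset.sum_mul]
            exact Finset.sum_congr rfl fun w _ => by rw [← he_mul_conj]
    rw [hfact, he_sum _ (sub_ne_zero.mpr hne), zero_mul]
  have hdiagsum : ∑ χ, ∑ χ', D χ χ' = ∑ χ, D χ χ :=
    Finset.sum_congr rfl fun χ _ => Finset.sum_eq_single χ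
      (fun χ' _ hne => hcross χ χ' (Ne.symm hne))
      (fun h => absurd (Finset.mem_univ χ) h)
  have hdiag_pos : ∀ χ, u χ ≠ 0 → 0 < D χ χ := by
    intro χ h
    have h2 := hproj (u χ) h (fun z => e χ z) ⟨0, by simp [he_zero]⟩
    simpa only [hD] using h2
  have hdiag_nonneg : ∀ χ ∈ Finset.univ, (0:ℂ) ≤ D χ χ := by
    intro χ _
    by_cases h : u χ = 0
    · simp only [hD]
      simp [h, cip_zero_right]
    · exact le_of_lt (hdiag_pos χ h)
  have hNinv_pos : (0:ℂ) < N⁻¹ := by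
    rw [hN, ← Complex.ofReal_natCast, ← Complex.ofReal_inv]
    exact Complex.zero_lt_real.mpr (by positivity)
  rw [hexpand, hdiagsum]
  exact mul_pos hNinv_pos (mul_pos hNinv_pos
    (Finset.sum_pos' hdiag_nonneg ⟨χ₀, Finset.mem_univ _, hdiag_pos χ₀ hχ₀⟩))

section Char
variable {l : ℕ} (q : Fin l → ℕ) [∀ r, NeZero (q r)]

/-- The character of `∏ ZMod (q r)` indexed by `χ`, evaluated at `x`. -/
noncomputable def echar (χ x : ∀ r, ZMod (q r)) : ℂ :=
  ∏ r, ZMod.stdAddChar (χ r * x r)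

variable {q}

lemma echar_symm (χ x : ∀ r, ZMod (q r)) : echar q χ x = echar q x χ := by
  unfold echar; exact Finset.prod_congr rfl fun r _ => by rw [mul_comm]

lemma echar_add_right (χ x y : ∀ r, ZMod (q r)) :
    echar q χ (x + y) = echar q χ x * echar q χ y := by
  unfold echar
  rw [← Finset.prod_mul_distrib]
  refine Finset.prod_congr rfl fun r _ => ?_
  rw [Pi.add_apply, mul_add, AddChar.map_add_eq_mul]

lemma echar_zero_right (χ : ∀ r, ZMod (q r)) : echar q χ 0 = 1 := by
  unfold echar
  simp

lemma conj_echar (χ x : ∀ r, ZMod (q r)) :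
    (starRingEnd ℂ) (echar q χ x) = echar q χ (-x) := by
  unfold echar
  rw [map_prod]
  refine Finset.prod_congr rfl fun r _ => ?_
  rw [ZMod.stdAddChar_apply, ZMod.stdAddChar_apply, ← Circle.coe_inv_eq_conj,
    ← AddChar.map_neg_eq_inv]
  simp [mul_neg]

lemma echar_sum_eq_zero {χ : ∀ r, ZMod (q r)} (hχ : χ ≠ 0) :
    ∑ x, echar q χ x = 0 := by
  obtain ⟨r₀, hr₀⟩ : ∃ r, χ r ≠ 0 := by
    by_contra h; push_neg at h; exact hχ (funext h)
  set b : ∀ r, ZMod (q r) := Pi.single r₀ 1 with hb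
  have hbval : echar q χ b = ZMod.stdAddChar (χ r₀) := by
    unfold echar
    rw [Finset.prod_eq_single r₀]
    · rw [hb, Pi.single_eq_same, mul_one]
    · intro r _ hr
      rw [hb, Pi.single_eq_of_ne hr, mul_zero, AddChar.map_zero_eq_one]
    · simp
  have hb1 : echar q χ b ≠ 1 := by
    rw [hbval]
    intro h
    apply hr₀
    apply ZMod.injective_stdAddChar
    rw [h, AddChar.map_zero_eq_one]
  have hshift : echar q χ b * ∑ x, echar q χ x = ∑ x, echar q χ x := by
    rw [Finset.mul_sum]
    calc ∑ x, echar q χ b * echar q χ x = ∑ x, echar q χ (b + x) := by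
          exact Finset.sum_congr rfl fun x _ => (echar_add_right χ b x).symm
      _ = ∑ x, echar q χ x := Equiv.sum_comp (Equiv.addLeft b) (echar q χ)
  have : (echar q χ b - 1) * ∑ x, echar q χ x = 0 := by
    rw [sub_mul, one_mul, hshift, sub_self]
  rcases mul_eq_zero.mp this with h | h
  · exact absurd (sub_eq_zero.mp h) hb1
  · exact h

end Char

/-- Let `G = ℤ_{q₁} × ⋯ × ℤ_{q_l}` with all `q_r ≥ 2`.  Then `P⁺(G,ℂ)` is
nonempty, and for every `ℓ ≥ 2` one has `P⁺_proj(G,ℂ^ℓ) = P⁺(G,ℂ^ℓ)`: a translation invariant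
matrix valued kernel on `G` all of whose scalar valued projections are strictly positive
definite is itself strictly positive definite. -/
theorem stmt_9 {l : ℕ} (q : Fin l → ℕ) (hq : ∀ r, 2 ≤ q r) :
    (∃ k : (∀ r, ZMod (q r)) → (∀ r, ZMod (q r)) → ℂ,
      (∀ g x y : ∀ r, ZMod (q r), k (g + x) (g + y) = k x y) ∧ IsSPDKer k) ∧
    (∀ ℓ : ℕ, 2 ≤ ℓ →
      {K : (∀ r, ZMod (q r)) → (∀ r, ZMod (q r)) → Matrix (Fin ℓ) (Fin ℓ) ℂ |
        (∀ g x y : ∀ r, ZMod (q r), K (g + x) (g + y) = K x y) ∧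
        ∀ v : Fin ℓ → ℂ, v ≠ 0 → IsSPDKer (projKer K v)} =
      {K : (∀ r, ZMod (q r)) → (∀ r, ZMod (q r)) → Matrix (Fin ℓ) (Fin ℓ) ℂ |
        (∀ g x y : ∀ r, ZMod (q r), K (g + x) (g + y) = K x y) ∧ IsSPDMat K}) := by
  haveI : ∀ r, NeZero (q r) := fun r => ⟨by have := hq r; omega⟩
  constructor
  · -- the delta kernel is translation invariant and strictly positive definite
    refine ⟨fun x y => if x = y then 1 else 0, fun g x y => by simp, ?_⟩
    rintro n x hx c ⟨μ₀, hc⟩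
    have hterm : ∀ μ ν : Fin n,
        c μ * (starRingEnd ℂ) (c ν) * (if x μ = x ν then (1:ℂ) else 0)
          = if μ = ν then c μ * (starRingEnd ℂ) (c μ) else 0 := by
      intro μ ν
      by_cases h : μ = ν
      · subst h; simp
      · rw [if_neg (fun hxx => h (hx hxx)), if_neg h, mul_zero]
    calc (0:ℂ) < ∑ μ, c μ * (starRingEnd ℂ) (c μ) := by
          refine Finset.sum_pos' (fun μ _ => ?_) ⟨μ₀, Finset.mem_univ _, ?_⟩
          · rw [Complex.mul_conj]
            exact Complex.zero_le_real.mpr (Complex.normSq_nonneg _)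
          · rw [Complex.mul_conj]
            exact Complex.zero_lt_real.mpr (Complex.normSq_pos.mpr hc)
      _ = ∑ μ, ∑ ν, c μ * (starRingEnd ℂ) (c ν) *
            (if x μ = x ν then (1:ℂ) else 0) := by
          refine (Finset.sum_congr rfl fun μ _ => ?_).symm
          rw [Finset.sum_congr rfl fun ν _ => hterm μ ν]
          rw [Finset.sum_ite_eq Finset.univ μ (fun _ => c μ * (starRingEnd ℂ) (c μ))]
          simp
  · intro ℓ _hℓ
    ext K
    simp only [Set.mem_setOf_eq]
    constructor
    · rintro ⟨hTI, hproj⟩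
      refine ⟨hTI, ?_⟩
      rintro n x hx v ⟨μ₀, hv⟩
      rw [← pad_eq K x v]
      have hproj' : ∀ u : Fin ℓ → ℂ, u ≠ 0 → ∀ c : (∀ r, ZMod (q r)) → ℂ,
          (∃ z, c z ≠ 0) →
          0 < ∑ z, ∑ w, c z * (starRingEnd ℂ) (c w) * cip ((K z w).mulVec u) u := by
        rintro u hu c ⟨z₀, hz₀⟩
        set eqv := (Fintype.equivFin (∀ r, ZMod (q r))).symm with heqv
        have h := hproj u hu (Fintype.card (∀ r, ZMod (q r))) (fun μ => eqv μ)
          eqv.injective (fun μ => c (eqv μ)) ⟨eqv.symm z₀, by simpa using hz₀⟩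
        have e1 : ∑ μ, ∑ ν, c (eqv μ) * (starRingEnd ℂ) (c (eqv ν)) *
              projKer K u (eqv μ) (eqv ν)
            = ∑ z, ∑ w, c z * (starRingEnd ℂ) (c w) * projKer K u z w := by
          calc ∑ μ, ∑ ν, c (eqv μ) * (starRingEnd ℂ) (c (eqv ν)) *
                projKer K u (eqv μ) (eqv ν)
              = ∑ μ, ∑ w, c (eqv μ) * (starRingEnd ℂ) (c w) *
                  projKer K u (eqv μ) w :=
                Finset.sum_congr rfl fun μ _ => Equiv.sum_comp eqv
                  (fun w => c (eqv μ) * (starRingEnd ℂ) (c w) * projKer K u (eqv μ) w)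
            _ = ∑ z, ∑ w, c z * (starRingEnd ℂ) (c w) * projKer K u z w :=
                Equiv.sum_comp eqv
                  (fun z => ∑ w, c z * (starRingEnd ℂ) (c w) * projKer K u z w)
        rw [e1] at h
        exact h
      have hWne : Vpad x v ≠ 0 := by
        intro h0
        apply hv
        have h1 : Vpad x v (x μ₀) = 0 := by rw [h0]; rfl
        rw [Vpad_apply hx v μ₀] at h1
        exact h1
      exact key (echar q) echar_add_right echar_symm conj_echar echar_zero_right
        (fun χ hχ => echar_sum_eq_zero hχ) K hTI hproj' (Vpad x v) hWne
    · rintro ⟨hTI, hSPD⟩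
      refine ⟨hTI, ?_⟩
      rintro v hv n x hx c ⟨μ₀, hc⟩
      have h := hSPD n x hx (fun μ => c μ • v) ⟨μ₀, smul_ne_zero hc hv⟩
      have e2 : ∑ μ, ∑ ν, cip ((K (x μ) (x ν)).mulVec (c μ • v)) (c ν • v)
          = ∑ μ, ∑ ν, c μ * (starRingEnd ℂ) (c ν) * projKer K v (x μ) (x ν) := by
        refine Finset.sum_congr rfl fun μ _ => Finset.sum_congr rfl fun ν _ => ?_
        rw [Matrix.mulVec_smul, cip_smul_smul]
        rfl
      rw [e2] at h
      exact h
end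

section
/- Let 𝓗 be a real Hilbert space and K : 𝓗 × 𝓗 → ℂ a continuous kernel such that K(Ax, y) = K(x, Aᵗy) for all x,y ∈ 𝓗 and every bounded linear operator A ∈ 𝓛(𝓗), where Aᵗ denotes the adjoint of A. Then there exists a continuous function h : ℝ → ℂ such that K(x,y) = h(⟨x,y⟩) for all x,y ∈ 𝓗. -/
open scoped RealInnerProductSpace

/-- Let `𝓗` be a real Hilbert space and `K : 𝓗 × 𝓗 → ℂ` a continuous kernel
with `K(Ax, y) = K(x, Aᵗy)` for every bounded linear operator `A` on `𝓗`.  Then there is a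
continuous function `h : ℝ → ℂ` such that `K(x,y) = h(⟪x, y⟫)`. -/
theorem stmt_14 {H : Type*} [NormedAddCommGroup H] [InnerProductSpace ℝ H] [CompleteSpace H]
    (K : H → H → ℂ)
    (hKcont : Continuous fun p : H × H => K p.1 p.2)
    (hadj : ∀ (A : H →L[ℝ] H) (x y : H), K (A x) y = K x ((ContinuousLinearMap.adjoint A) y)) :
    ∃ h : ℝ → ℂ, Continuous h ∧ ∀ x y : H, K x y = h ⟪x, y⟫ := by
  rcases subsingleton_or_nontrivial H with hs | hn
  · refine ⟨fun _ => K 0 0, continuous_const, fun x y => ?_⟩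
    rw [Subsingleton.elim x 0, Subsingleton.elim y 0]
  · obtain ⟨z, hz⟩ := exists_ne (0 : H)
    set e : H := ‖z‖⁻¹ • z with he
    have hne : ‖e‖ = 1 := by
      rw [he, norm_smul, norm_inv, norm_norm, inv_mul_cancel₀ (norm_ne_zero_iff.mpr hz)]
    refine ⟨fun t => K e (t • e), ?_, fun x y => ?_⟩
    · exact hKcont.comp (continuous_const.prodMk (continuous_id.smul continuous_const))
    · set A : H →L[ℝ] H := (innerSL ℝ e).smulRight x with hA
      set B : H →L[ℝ] H := (innerSL ℝ x).smulRight e with hB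
      have hBA : ContinuousLinearMap.adjoint A = B := by
        symm
        rw [ContinuousLinearMap.eq_adjoint_iff]
        intro u v
        simp [hA, hB, real_inner_smul_left, real_inner_smul_right, mul_comm,
          real_inner_comm u e, real_inner_comm x u]
      have h1 := hadj A e y
      have hAe : A e = x := by
        simp [hA, real_inner_self_eq_norm_sq, hne]
      have hBy : (ContinuousLinearMap.adjoint A) y = ⟪x, y⟫ • e := by
        rw [hBA]; simp [hB]
      rw [hAe, hBy] at h1
      exact h1
end

section
/- Let 𝓗 be a complex Hilbert space and K : 𝓗 × 𝓗 → ℂ a continuous kernel such that K(Ax, y) = K(x, A*y) for all x,y ∈ 𝓗 and every injective bounded linear operator A on 𝓗, where A* denotes the adjoint of A. Then there exists a continuous function h : ℂ → ℂ such that K(x,y) = h(⟨x,y⟩) for all x,y ∈ 𝓗. -/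
/-!
Every injective operator `A` satisfies `⟪A x, y⟫ = ⟪x, A† y⟫`, so the hypothesis says that `K` is
constant along the same moves that preserve the inner product. Already the rank-one perturbations
`A = 1 + |b⟩⟨c|`, injective as soon as `1 + ⟪c, b⟫ ≠ 0`, connect any pair `(x, y)` with
`⟪x, y⟫ = z ≠ 0` to the pair `(conj z • e, e)` for a fixed unit vector `e`. Pairs with `⟪x, y⟫ = 0`
cannot be reached this way (an injective operator fixes only `0`), and are handled by continuity of
`K`, approaching them through pairs with nonzero inner product.
-/

open scoped ComplexInnerProductSpace InnerProductSpace
open InnerProductSpace ContinuousLinearMap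

section

variable {𝕜 E : Type*} [RCLike 𝕜] [NormedAddCommGroup E] [InnerProductSpace 𝕜 E]

theorem injective_one_add_rankOne {b c : E} (hbc : 1 + ⟪c, b⟫_𝕜 ≠ 0) :
    Function.Injective (1 + rankOne 𝕜 b c : E →L[𝕜] E) := by
  refine (injective_iff_map_eq_zero _).2 fun w hw => ?_
  replace hw : w + ⟪c, w⟫_𝕜 • b = 0 := hw
  have hcw : ⟪c, w⟫_𝕜 * (1 + ⟪c, b⟫_𝕜) = 0 := by
    have := congrArg (inner 𝕜 c) hw
    simp only [inner_add_right, inner_smul_right, inner_zero_right] at this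
    linear_combination this
  rw [(mul_eq_zero.1 hcw).resolve_right hbc, zero_smul, add_zero] at hw
  exact hw

theorem exists_inner_eq_one_inner_ne_zero {e y : E} (he : ⟪e, e⟫_𝕜 = 1) (hy : y ≠ 0) :
    ∃ b : E, ⟪b, e⟫_𝕜 = 1 ∧ ⟪y, b⟫_𝕜 ≠ 0 := by
  by_cases hye : ⟪y, e⟫_𝕜 = 0
  · refine ⟨e + y, by rw [inner_add_left, he, hye, add_zero], ?_⟩
    rwa [inner_add_right, hye, zero_add, inner_self_ne_zero]
  · exact ⟨e, he, hye⟩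

theorem eq_comp_inner_of_inner_ne_zero [Nontrivial E] {α : Type*} [TopologicalSpace α]
    [T2Space α] {F : E → E → α} (hF : Continuous fun p : E × E => F p.1 p.2) {h : 𝕜 → α}
    (hh : Continuous h) (hFh : ∀ x y, ⟪x, y⟫_𝕜 ≠ 0 → F x y = h ⟪x, y⟫_𝕜) (x y : E) :
    F x y = h ⟪x, y⟫_𝕜 := by
  have of_right_ne_zero : ∀ x y, y ≠ 0 → F x y = h ⟪x, y⟫_𝕜 := by
    intro x y hy
    by_cases hxy : ⟪x, y⟫_𝕜 = 0
    · have key := (hF.comp (by fun_prop : Continuous fun t : 𝕜 => (x + t • y, y))).ext_on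
        (dense_compl_singleton 0)
        (hh.comp (by fun_prop : Continuous fun t : 𝕜 => ⟪x + t • y, y⟫_𝕜)) fun t ht => by
          refine hFh _ _ ?_
          rw [inner_add_left, inner_smul_left, hxy, zero_add]
          exact mul_ne_zero ((map_ne_zero _).2 ht) (inner_self_ne_zero.2 hy)
      simpa using congrFun key 0
    · exact hFh x y hxy
  rcases eq_or_ne y 0 with rfl | hy
  · obtain ⟨w, hw⟩ := exists_ne (0 : E)
    have key := (hF.comp (by fun_prop : Continuous fun t : 𝕜 => (x, t • w))).ext_on
      (dense_compl_singleton 0) (hh.comp (by fun_prop : Continuous fun t : 𝕜 => ⟪x, t • w⟫_𝕜))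
      fun t ht => of_right_ne_zero _ _ (smul_ne_zero ht hw)
    simpa using congrFun key 0
  · exact of_right_ne_zero x y hy

end

section

variable {𝕜 E : Type*} [RCLike 𝕜] [NormedAddCommGroup E] [InnerProductSpace 𝕜 E]
  [CompleteSpace E]

def AdjointInvariant (K : E → E → 𝕜) : Prop :=
  ∀ A : E →L[𝕜] E, Function.Injective A → ∀ x y, K (A x) y = K x (adjoint A y)

namespace AdjointInvariant

variable {K : E → E → 𝕜}

theorem apply_add_inner_smul (hK : AdjointInvariant K) {b c : E} (hbc : 1 + ⟪c, b⟫_𝕜 ≠ 0)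
    (x y : E) :
    K (x + ⟪c, x⟫_𝕜 • b) y = K x (y + ⟪b, y⟫_𝕜 • c) := by
  simpa [map_add, adjoint_one] using hK _ (injective_one_add_rankOne hbc) x y

theorem apply_eq_of_inner_eq (hK : AdjointInvariant K) {u v y : E} (hu : ⟪u, y⟫_𝕜 ≠ 0)
    (huv : ⟪u, y⟫_𝕜 = ⟪v, y⟫_𝕜) : K u y = K v y := by
  set c : E := (⟪u, y⟫_𝕜)⁻¹ • y
  have hc : ∀ w, ⟪w, y⟫_𝕜 = ⟪u, y⟫_𝕜 → ⟪c, w⟫_𝕜 = 1 := fun w hw => by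
    rw [inner_smul_left, ← inner_conj_symm y w, hw, ← map_mul, inv_mul_cancel₀ hu, map_one]
  have hcu := hc u rfl
  have hcv := hc v huv.symm
  have key := hK.apply_add_inner_smul (b := v - u) (c := c)
    (by simp [inner_sub_right, hcu, hcv]) u y
  rwa [hcu, one_smul, add_sub_cancel, inner_sub_left, huv, sub_self, zero_smul, add_zero,
    eq_comm] at key

theorem exists_inner_eq_and_apply_eq (hK : AdjointInvariant K) {e y : E} (he : ⟪e, e⟫_𝕜 = 1)
    (hy : y ≠ 0) (x : E) : ∃ v, ⟪v, e⟫_𝕜 = ⟪x, y⟫_𝕜 ∧ K x y = K v e := by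
  obtain ⟨b, hbe, hyb⟩ := exists_inner_eq_one_inner_ne_zero he hy
  have heb : ⟪e, b⟫_𝕜 = 1 := by rw [← inner_conj_symm, hbe, map_one]
  have key := hK.apply_add_inner_smul (b := b) (c := y - e)
    (by rwa [inner_sub_left, heb, add_sub_cancel]) x e
  rw [hbe, one_smul, add_sub_cancel] at key
  refine ⟨_, ?_, key.symm⟩
  rw [inner_add_left, inner_smul_left, hbe, mul_one, inner_conj_symm, inner_sub_right,
    add_sub_cancel]

theorem apply_eq_apply_smul_of_inner_ne_zero (hK : AdjointInvariant K) {e x y : E}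
    (he : ⟪e, e⟫_𝕜 = 1) (hxy : ⟪x, y⟫_𝕜 ≠ 0) : K x y = K (starRingEnd 𝕜 ⟪x, y⟫_𝕜 • e) e := by
  have hy : y ≠ 0 := by rintro rfl; simp at hxy
  obtain ⟨v, hve, hK_eq⟩ := hK.exists_inner_eq_and_apply_eq he hy x
  rw [hK_eq]
  exact hK.apply_eq_of_inner_eq (hve ▸ hxy)
    (by rw [hve, inner_smul_left, RCLike.conj_conj, he, mul_one])

end AdjointInvariant
end

/-- Let `𝓗` be a complex Hilbert space and `K : 𝓗 × 𝓗 → ℂ` a continuous kernel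
with `K(Ax, y) = K(x, A*y)` for every injective bounded linear operator `A` on `𝓗`.  Then
there is a continuous function `h : ℂ → ℂ` such that `K(x,y) = h(⟨x,y⟩)`. -/
theorem stmt_15 {H : Type*} [NormedAddCommGroup H] [InnerProductSpace ℂ H] [CompleteSpace H]
    (K : H → H → ℂ)
    (hKcont : Continuous fun p : H × H => K p.1 p.2)
    (hadj : ∀ A : H →L[ℂ] H, Function.Injective A →
      ∀ x y : H, K (A x) y = K x ((ContinuousLinearMap.adjoint A) y)) :
    ∃ h : ℂ → ℂ, Continuous h ∧ ∀ x y : H, K x y = h ⟪x, y⟫ := by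
  rcases subsingleton_or_nontrivial H with hH | hH
  · exact ⟨fun _ => K 0 0, continuous_const, fun x y => by
      rw [Subsingleton.elim x 0, Subsingleton.elim y 0]⟩
  obtain ⟨e, he⟩ := exists_norm_eq H zero_le_one
  have hK : AdjointInvariant K := hadj
  let h : ℂ → ℂ := fun z => K (starRingEnd ℂ z • e) e
  have hh : Continuous h :=
    hKcont.comp (by fun_prop : Continuous fun z : ℂ => (starRingEnd ℂ z • e, e))
  exact ⟨h, hh, eq_comp_inner_of_inner_ne_zero hKcont hh fun x y hxy =>
    hK.apply_eq_apply_smul_of_inner_ne_zero (inner_self_eq_one_of_norm_eq_one he) hxy⟩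
end

section
/- Let 𝓗 be a real Hilbert space and k : 𝓗 × 𝓗 → ℂ a strictly positive definite kernel such that k(0,x) = k(x,0) = k(0,0) for all x ∈ 𝓗 (as is the case for a dot product kernel k(x,y) = h(⟨x,y⟩)). Then the kernel l(x,y) := k(x,y) − k(0,0) is strictly positive definite on 𝓗 \ {0}: for every finite set of distinct nonzero points x₁,…,xₙ ∈ 𝓗 and scalars c₁,…,cₙ ∈ ℂ not all zero, ∑_{μ,ν=1}^n c_μ c̄_ν l(x_μ,x_ν) > 0. -/
open scoped ComplexOrder

/-- Let `𝓗` be a real Hilbert space and `k` a strictly positive definite kernel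
with `k(0,x) = k(x,0) = k(0,0)` for all `x`.  Then `l(x,y) := k(x,y) - k(0,0)` is strictly
positive definite on `𝓗 \ {0}`. -/
theorem stmt_16 {H : Type*} [NormedAddCommGroup H] [InnerProductSpace ℝ H]
    (k : H → H → ℂ)
    (hk : IsSPDKer k)
    (h0 : ∀ x : H, k 0 x = k 0 0 ∧ k x 0 = k 0 0) :
    ∀ (n : ℕ) (x : Fin n → H), Function.Injective x → (∀ μ, x μ ≠ 0) →
      ∀ c : Fin n → ℂ, (∃ μ, c μ ≠ 0) →
        0 < ∑ μ : Fin n, ∑ ν : Fin n,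
          c μ * (starRingEnd ℂ) (c ν) * (k (x μ) (x ν) - k 0 0) := by
  
  intro n x hinj hne c hc
  set S := ∑ μ, c μ with hS
  have hyinj : Function.Injective (Fin.cons 0 x : Fin (n+1) → H) := by
    refine Fin.cons_injective_iff.2 ⟨?_, hinj⟩
    rintro ⟨μ, hμ⟩
    exact hne μ hμ
  obtain ⟨μ₀, hμ₀⟩ := hc
  have hpos := hk (n+1) (Fin.cons 0 x) hyinj (Fin.cons (-S) c)
    ⟨μ₀.succ, by simpa using hμ₀⟩
  have key : (∑ μ : Fin (n+1), ∑ ν : Fin (n+1),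
        (Fin.cons (-S) c : Fin (n+1) → ℂ) μ * (starRingEnd ℂ) ((Fin.cons (-S) c : Fin (n+1) → ℂ) ν)
          * k ((Fin.cons 0 x : Fin (n+1) → H) μ) ((Fin.cons 0 x : Fin (n+1) → H) ν))
      = ∑ μ : Fin n, ∑ ν : Fin n,
          c μ * (starRingEnd ℂ) (c ν) * (k (x μ) (x ν) - k 0 0) := by
    simp only [Fin.sum_univ_succ, Fin.cons_zero, Fin.cons_succ]
    have h1 : ∀ ν, k 0 (x ν) = k 0 0 := fun ν => (h0 (x ν)).1
    have h2 : ∀ μ, k (x μ) 0 = k 0 0 := fun μ => (h0 (x μ)).2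
    simp only [h1, h2, mul_sub, Finset.sum_sub_distrib]
    have hconj : ∀ a : ℂ, (∑ ν : Fin n, a * (starRingEnd ℂ) (c ν) * k 0 0)
        = a * (starRingEnd ℂ) S * k 0 0 := fun a => by
      rw [hS, map_sum, Finset.mul_sum, Finset.sum_mul]
    have hsum1 : (∑ i : Fin n, -S * (starRingEnd ℂ) (c i)) = -S * (starRingEnd ℂ) S := by
      rw [← Finset.mul_sum, hS, map_sum]
    have hsum2 : (∑ i : Fin n, c i * (starRingEnd ℂ) (-S) * k 0 0)
        = S * (starRingEnd ℂ) (-S) * k 0 0 := by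
      rw [← Finset.sum_mul, ← Finset.sum_mul, ← hS]
    simp only [Finset.sum_add_distrib, hconj, hsum1, hsum2]
    rw [← Finset.sum_mul, ← Finset.sum_mul, ← hS]
    ring
  rw [key] at hpos
  exact hpos
end

section
/- Let m ∈ ℕ, σ > 0 and z ∈ ℝ^m \ {0}. The matrix valued kernel K : ℝ^m × ℝ^m → M₂(ℂ) defined by K(x,y) = [[e^{−σ‖x−y‖²}, e^{−σ‖x+z−y‖²}], [e^{−σ‖x−y−z‖²}, e^{−σ‖x−y‖²}]] is positive definite but not strictly positive definite, while every scalar valued projection K_v, v ∈ ℂ² \ {0}, is a strictly positive definite kernel on ℝ^m. -/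
open scoped ComplexOrder

/-- The Gaussian-type matrix valued kernel
`K(x,y) = [[e^{-σ‖x-y‖²}, e^{-σ‖x+z-y‖²}], [e^{-σ‖x-y-z‖²}, e^{-σ‖x-y‖²}]]` on `ℝ^m`. -/
noncomputable def Kgauss (m : ℕ) (σ : ℝ) (z : EuclideanSpace ℝ (Fin m)) :
    EuclideanSpace ℝ (Fin m) → EuclideanSpace ℝ (Fin m) → Matrix (Fin 2) (Fin 2) ℂ :=
  fun x y =>
    !![(Real.exp (-σ * ‖x - y‖ ^ 2) : ℂ), (Real.exp (-σ * ‖x + z - y‖ ^ 2) : ℂ);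
       (Real.exp (-σ * ‖x - y - z‖ ^ 2) : ℂ), (Real.exp (-σ * ‖x - y‖ ^ 2) : ℂ)]

/-!
The quadratic form of `Kgauss` at points `x μ` with vectors `v μ` is the quadratic form of the
scalar Gaussian kernel at the `2n` points `x μ` and `x μ + z`, weighted by the entries of `v μ`.
Writing `e^{-σ‖a - b‖²} = e^{-σ‖a‖²} e^{-σ‖b‖²} ∑ₖ (2σ)ᵏ/k! ⟪a, b⟫ᵏ` and expanding `⟪a, b⟫ᵏ` into
monomials shows that the Gaussian form is a convergent sum of squares. If it vanishes, every
moment `∑ μ, d μ * ∏ j, p μ (F j)` vanishes, hence `∑ μ, d μ * exp ⟪p μ, y⟫ = 0` for all `y`,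
and Dedekind's independence of characters kills the total weight at every point.

The matrix kernel is not strict because the points `0 + z` and `z + 0` coincide and their weights
can cancel. For a projection `K_v` with weights `c μ * v j`, the total weight at `y` is
`v 0 * a y + v 1 * a (y - z)` with `a y` the weight of `y` among the `x μ`; at the point `y₀` of
the support of `a` furthest in the direction of `z` this forces `v 1 = 0`, and then `v 0 = 0`.
-/

open Finset
open scoped ComplexConjugate RealInnerProductSpace Matrix

section GramForm

variable {X ι : Type*} [Fintype ι]

noncomputable def gramForm (k : X → X → ℂ) (p : ι → X) (c : ι → ℂ) : ℂ :=
  ∑ μ, ∑ ν, c μ * conj (c ν) * k (p μ) (p ν)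

theorem gramForm_mul_conj (φ : X → ℂ) (p : ι → X) (c : ι → ℂ) :
    gramForm (fun a b => φ a * conj (φ b)) p c = Complex.normSq (∑ μ, c μ * φ (p μ)) := by
  rw [← Complex.mul_conj, map_sum, sum_mul_sum, gramForm]
  simp only [map_mul]
  exact sum_congr rfl fun _ _ => sum_congr rfl fun _ _ => by ring

theorem gramForm_sum {α : Type*} (s : Finset α) (g : α → X → X → ℂ) (p : ι → X) (c : ι → ℂ) :
    gramForm (fun a b => ∑ i ∈ s, g i a b) p c = ∑ i ∈ s, gramForm (g i) p c := by
  simp only [gramForm, mul_sum]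
  exact (sum_congr rfl fun _ _ => sum_comm).trans sum_comm

theorem gramForm_const_mul (r : ℂ) (k : X → X → ℂ) (p : ι → X) (c : ι → ℂ) :
    gramForm (fun a b => r * k a b) p c = r * gramForm k p c := by
  simp only [gramForm, mul_sum]
  exact sum_congr rfl fun _ _ => sum_congr rfl fun _ _ => by ring

theorem hasSum_gramForm {α : Type*} {g : α → X → X → ℂ} {k : X → X → ℂ}
    (h : ∀ a b, HasSum (fun n => g n a b) (k a b)) (p : ι → X) (c : ι → ℂ) :
    HasSum (fun n => gramForm (g n) p c) (gramForm k p c) :=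
  hasSum_sum fun μ _ => hasSum_sum fun ν _ => (h (p μ) (p ν)).mul_left _

end GramForm

section Characters

variable {E : Type*} [NormedAddCommGroup E] [InnerProductSpace ℝ E]

noncomputable def expInnerChar (x : E) : Multiplicative E →* ℂ where
  toFun y := Complex.exp ⟪x, y.toAdd⟫
  map_one' := by simp
  map_mul' y y' := by simp [inner_add_right, Complex.exp_add]

theorem expInnerChar_injective : Function.Injective (expInnerChar (E := E)) := by
  intro x x' h
  refine ext_inner_right ℝ fun y => ?_
  have : Complex.exp ⟪x, y⟫ = Complex.exp ⟪x', y⟫ := DFunLike.congr_fun h (Multiplicative.ofAdd y)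
  rwa [← Complex.ofReal_exp, ← Complex.ofReal_exp, Complex.ofReal_inj, Real.exp_eq_exp] at this

theorem sum_fiber_eq_zero_of_sum_mul_exp_inner_eq_zero {ι : Type*} [Fintype ι] [DecidableEq E]
    {p : ι → E} {d : ι → ℂ} (h : ∀ y, ∑ μ, d μ * Complex.exp ⟪p μ, y⟫ = 0) (x : E) :
    ∑ μ ∈ univ.filter (p · = x), d μ = 0 := by
  classical
  have hind := linearIndependent_iff'.1 (linearIndependent_monoidHom (Multiplicative E) ℂ)
  set s := univ.image (expInnerChar ∘ p)
  have hs : ∑ χ ∈ s, (∑ μ ∈ univ.filter (fun μ => expInnerChar (p μ) = χ), d μ) • ⇑χ = 0 := by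
    calc _ = ∑ χ ∈ s, ∑ μ ∈ univ.filter (fun μ => expInnerChar (p μ) = χ),
          d μ • ⇑(expInnerChar (p μ)) := by
          simp_rw [sum_smul]
          exact sum_congr rfl fun χ _ => sum_congr rfl fun μ hμ => by rw [(mem_filter.1 hμ).2]
      _ = ∑ μ, d μ • ⇑(expInnerChar (p μ)) :=
          sum_fiberwise_of_maps_to (fun μ _ => mem_image_of_mem (expInnerChar ∘ p) (mem_univ μ)) _
      _ = 0 := funext fun y => by simpa [expInnerChar] using h y.toAdd
  by_cases hx : ∃ μ₀, p μ₀ = x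
  · obtain ⟨μ₀, rfl⟩ := hx
    have := hind s _ hs (expInnerChar (p μ₀)) (mem_image_of_mem _ (mem_univ μ₀))
    simpa only [expInnerChar_injective.eq_iff] using this
  · exact sum_eq_zero fun μ hμ => (hx ⟨μ, (mem_filter.1 hμ).2⟩).elim

theorem sum_mul_exp_inner_eq_zero {ι : Type*} [Fintype ι] {p : ι → E} {d : ι → ℂ}
    (h : ∀ k y, ∑ μ, d μ * (⟪p μ, y⟫ : ℂ) ^ k = 0) (y : E) :
    ∑ μ, d μ * Complex.exp ⟪p μ, y⟫ = 0 := by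
  have hexp : ∀ μ, HasSum (fun k : ℕ => d μ * ((⟪p μ, y⟫ : ℂ) ^ k / k.factorial))
      (d μ * Complex.exp ⟪p μ, y⟫) := fun μ => by
    rw [Complex.exp_eq_exp_ℂ]
    exact (NormedSpace.expSeries_div_hasSum_exp (⟪p μ, y⟫ : ℂ)).mul_left (d μ)
  refine (hasSum_sum fun μ _ => hexp μ).unique ?_
  convert (hasSum_zero : HasSum (fun _ : ℕ => (0 : ℂ)) 0) using 1
  funext k
  simp_rw [mul_div_assoc', ← sum_div, h, zero_div]

end Characters

section Gaussian

open scoped Nat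

variable {κ ι : Type*} [Fintype κ] [Fintype ι]

theorem EuclideanSpace.inner_pow_eq_sum (a b : EuclideanSpace ℝ κ) (k : ℕ) :
    ⟪a, b⟫ ^ k = ∑ F : Fin k → κ, (∏ j, a (F j)) * ∏ j, b (F j) := by
  simp only [PiLp.inner_apply, RCLike.inner_apply, conj_trivial, Fintype.sum_pow,
    ← prod_mul_distrib, mul_comm]

theorem sum_mul_inner_pow_eq_zero {p : ι → EuclideanSpace ℝ κ} {d : ι → ℂ} {k : ℕ}
    (h : ∀ F : Fin k → κ, ∑ μ, d μ * ∏ j, (p μ (F j) : ℂ) = 0) (y : EuclideanSpace ℝ κ) :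
    ∑ μ, d μ * (⟪p μ, y⟫ : ℂ) ^ k = 0 := by
  simp_rw [← Complex.ofReal_pow, EuclideanSpace.inner_pow_eq_sum, Complex.ofReal_sum,
    Complex.ofReal_mul, Complex.ofReal_prod, mul_sum]
  rw [sum_comm]
  refine sum_eq_zero fun F _ => ?_
  simp_rw [← mul_assoc, ← sum_mul, h F, zero_mul]

noncomputable def gaussKernel {E : Type*} [SeminormedAddCommGroup E] (σ : ℝ) (a b : E) : ℂ :=
  Real.exp (-σ * ‖a - b‖ ^ 2)

noncomputable def gaussFeature (σ : ℝ) {k : ℕ} (F : Fin k → κ) (a : EuclideanSpace ℝ κ) : ℝ :=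
  Real.exp (-σ * ‖a‖ ^ 2) * ∏ j, a (F j)

theorem hasSum_gaussFeature_mul (σ : ℝ) (a b : EuclideanSpace ℝ κ) :
    HasSum (fun k => (2 * σ) ^ k / k ! *
      ∑ F : Fin k → κ, gaussFeature σ F a * gaussFeature σ F b) (Real.exp (-σ * ‖a - b‖ ^ 2)) := by
  have hsplit : Real.exp (-σ * ‖a - b‖ ^ 2) =
      Real.exp (-σ * ‖a‖ ^ 2) * Real.exp (-σ * ‖b‖ ^ 2) * Real.exp (2 * σ * ⟪a, b⟫) := by
    rw [← Real.exp_add, ← Real.exp_add, norm_sub_sq_real]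
    ring_nf
  have hexp := NormedSpace.expSeries_div_hasSum_exp (2 * σ * ⟪a, b⟫)
  rw [← Real.exp_eq_exp_ℝ] at hexp
  rw [hsplit]
  refine (hexp.mul_left (Real.exp (-σ * ‖a‖ ^ 2) * Real.exp (-σ * ‖b‖ ^ 2))).congr_fun fun k => ?_
  simp only [gaussFeature, mul_pow, EuclideanSpace.inner_pow_eq_sum, mul_sum, sum_div]
  exact sum_congr rfl fun F _ => by ring

theorem hasSum_gramForm_gaussKernel (σ : ℝ) (p : ι → EuclideanSpace ℝ κ) (c : ι → ℂ) :
    HasSum (fun k => (((2 * σ) ^ k / k ! *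
      ∑ F : Fin k → κ, Complex.normSq (∑ μ, c μ * gaussFeature σ F (p μ)) : ℝ) : ℂ))
      (gramForm (gaussKernel σ) p c) := by
  have hsum :=
    hasSum_gramForm (fun a b => Complex.hasSum_ofReal.2 (hasSum_gaussFeature_mul σ a b)) p c
  refine hsum.congr_fun fun k => ?_
  have hker : (fun a b => (((2 * σ) ^ k / k ! *
      ∑ F : Fin k → κ, gaussFeature σ F a * gaussFeature σ F b : ℝ) : ℂ)) =
      fun a b => (((2 * σ) ^ k / k ! : ℝ) : ℂ) *
        ∑ F : Fin k → κ, (gaussFeature σ F a : ℂ) * conj (gaussFeature σ F b : ℂ) := by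
    simp only [Complex.conj_ofReal]
    push_cast
    rfl
  rw [hker, gramForm_const_mul, gramForm_sum]
  simp only [gramForm_mul_conj]
  push_cast
  rfl

theorem gramForm_gaussKernel_nonneg {σ : ℝ} (hσ : 0 ≤ σ) (p : ι → EuclideanSpace ℝ κ)
    (c : ι → ℂ) : 0 ≤ gramForm (gaussKernel σ) p c :=
  (hasSum_gramForm_gaussKernel σ p c).nonneg fun k => Complex.zero_le_real.2 <|
    mul_nonneg (by positivity) (sum_nonneg fun F _ => Complex.normSq_nonneg _)

theorem sum_fiber_eq_zero_of_gramForm_gaussKernel_eq_zero [DecidableEq (EuclideanSpace ℝ κ)]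
    {σ : ℝ} (hσ : 0 < σ) {p : ι → EuclideanSpace ℝ κ} {c : ι → ℂ}
    (h : gramForm (gaussKernel σ) p c = 0) (x : EuclideanSpace ℝ κ) :
    ∑ μ ∈ univ.filter (p · = x), c μ = 0 := by
  have hterms := (hasSum_zero_iff_of_nonneg fun k => Complex.zero_le_real.2 <|
    mul_nonneg (by positivity) (sum_nonneg fun F _ => Complex.normSq_nonneg _)).1
    (h ▸ hasSum_gramForm_gaussKernel σ p c)
  have hmoments : ∀ k (F : Fin k → κ), ∑ μ, c μ * gaussFeature σ F (p μ) = 0 := by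
    intro k F
    have hk := congr_fun hterms k
    simp only [Pi.zero_apply, Complex.ofReal_eq_zero] at hk
    have hw : (0 : ℝ) < (2 * σ) ^ k / k ! := by positivity
    have hF := (sum_eq_zero_iff_of_nonneg fun F _ => Complex.normSq_nonneg _).1
      ((mul_eq_zero.1 hk).resolve_left hw.ne') F (mem_univ F)
    exact Complex.normSq_eq_zero.1 hF
  set d : ι → ℂ := fun μ => c μ * Real.exp (-σ * ‖p μ‖ ^ 2)
  have hpow : ∀ k y, ∑ μ, d μ * (⟪p μ, y⟫ : ℂ) ^ k = 0 := fun k =>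
    sum_mul_inner_pow_eq_zero fun F => by
      simpa only [d, gaussFeature, Complex.ofReal_mul, Complex.ofReal_prod, mul_assoc]
        using hmoments k F
  have hd : ∑ μ ∈ univ.filter (p · = x), d μ = 0 :=
    sum_fiber_eq_zero_of_sum_mul_exp_inner_eq_zero (sum_mul_exp_inner_eq_zero hpow) x
  have hfiber : ∑ μ ∈ univ.filter (p · = x), d μ =
      (∑ μ ∈ univ.filter (p · = x), c μ) * Real.exp (-σ * ‖x‖ ^ 2) := by
    rw [sum_mul]
    exact sum_congr rfl fun μ hμ => by simp only [d, (mem_filter.1 hμ).2]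
  rw [hfiber] at hd
  exact (mul_eq_zero.1 hd).resolve_right (Complex.ofReal_ne_zero.2 (Real.exp_pos _).ne')

end Gaussian

section Shift

variable {E : Type*} [NormedAddCommGroup E] [InnerProductSpace ℝ E]

theorem eq_zero_of_mul_add_mul_sub_eq_zero {a : E → ℂ} (ha : a.support.Finite) (ha0 : a ≠ 0)
    {z : E} (hz : z ≠ 0) {u w : ℂ} (h : ∀ y, u * a y + w * a (y - z) = 0) : u = 0 ∧ w = 0 := by
  obtain ⟨y₀, hy₀, hmax⟩ := Set.exists_max_image a.support (⟪·, z⟫) ha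
    (Function.support_nonempty_iff.2 ha0)
  have hnext : a (y₀ + z) = 0 := by
    by_contra hne
    have := hmax (y₀ + z) hne
    rw [inner_add_left, real_inner_self_eq_norm_sq] at this
    linarith [pow_pos (norm_pos_iff.2 hz) 2]
  have hw : w = 0 := by
    simpa [hnext, Function.mem_support.1 hy₀] using h (y₀ + z)
  refine ⟨?_, hw⟩
  simpa [hw, Function.mem_support.1 hy₀] using h y₀

end Shift

def shiftedPoints {ι E : Type*} [AddZeroClass E] (x : ι → E) (z : E) : ι × Fin 2 → E :=
  fun t => x t.1 + ![0, z] t.2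

theorem sum_filter_shiftedPoints_eq {ι E : Type*} [Fintype ι] [AddGroup E] [DecidableEq E]
    (x : ι → E) (z : E) (c : ι → ℂ) (v : Fin 2 → ℂ) (y : E) :
    ∑ t ∈ univ.filter (shiftedPoints x z · = y), c t.1 * v t.2 =
      v 0 * ∑ μ ∈ univ.filter (x · = y), c μ + v 1 * ∑ μ ∈ univ.filter (x · = y - z), c μ := by
  simp only [sum_filter, Fintype.sum_prod_type, Fin.sum_univ_two, mul_sum, ← sum_add_distrib]
  refine sum_congr rfl fun μ _ => ?_
  simp only [shiftedPoints, Matrix.cons_val_zero, Matrix.cons_val_one, add_zero,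
    ← eq_sub_iff_add_eq]
  split_ifs <;> ring

theorem gramForm_projKer {X ι : Type*} [Fintype ι] {ℓ : ℕ}
    (K : X → X → Matrix (Fin ℓ) (Fin ℓ) ℂ) (v : Fin ℓ → ℂ) (x : ι → X) (c : ι → ℂ) :
    gramForm (projKer K v) x c = ∑ μ, ∑ ν, cip (K (x μ) (x ν) *ᵥ (c μ • v)) (c ν • v) := by
  simp only [gramForm, projKer, cip, Matrix.mulVec_smul, Pi.smul_apply, smul_eq_mul, map_mul,
    mul_sum]
  exact sum_congr rfl fun μ _ => sum_congr rfl fun ν _ => sum_congr rfl fun i _ => by ring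

section Kgauss

variable {m : ℕ} {σ : ℝ} {z : EuclideanSpace ℝ (Fin m)}

theorem cip_Kgauss_mulVec (a b : EuclideanSpace ℝ (Fin m)) (u w : Fin 2 → ℂ) :
    cip (Kgauss m σ z a b *ᵥ u) w = ∑ j, ∑ i, u j * conj (w i) *
      gaussKernel σ (a + ![0, z] j) (b + ![0, z] i) := by
  simp only [cip, Kgauss, gaussKernel, Matrix.mulVec, dotProduct, Fin.sum_univ_two,
    Matrix.of_apply, Matrix.cons_val', Matrix.cons_val_zero, Matrix.cons_val_one,
    Matrix.empty_val', Matrix.cons_val_fin_one, add_zero, sub_sub, add_sub_add_right_eq_sub]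
  ring

theorem sum_cip_Kgauss_eq_gramForm {ι : Type*} [Fintype ι] (x : ι → EuclideanSpace ℝ (Fin m))
    (w : ι → Fin 2 → ℂ) :
    ∑ μ, ∑ ν, cip (Kgauss m σ z (x μ) (x ν) *ᵥ w μ) (w ν) =
      gramForm (gaussKernel σ) (shiftedPoints x z) (fun t => w t.1 t.2) := by
  simp only [gramForm, Fintype.sum_prod_type, cip_Kgauss_mulVec, shiftedPoints]
  exact sum_congr rfl fun μ _ => sum_comm

theorem isPDMat_Kgauss (hσ : 0 ≤ σ) : IsPDMat (Kgauss m σ z) :=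
  fun n x _ w => by
    rw [sum_cip_Kgauss_eq_gramForm]
    exact gramForm_gaussKernel_nonneg hσ _ _

theorem not_isSPDMat_Kgauss (hz : z ≠ 0) : ¬ IsSPDMat (Kgauss m σ z) := by
  intro hspd
  have hx : Function.Injective ![0, z] := by
    intro i j hij
    fin_cases i <;> fin_cases j <;> simp_all [eq_comm]
  have := hspd 2 ![0, z] hx ![![0, 1], ![-1, 0]] ⟨0, fun h => by simpa using congr_fun h 1⟩
  simp [cip, Kgauss, Matrix.mulVec, dotProduct, Fin.sum_univ_two] at this

theorem isSPDKer_projKer_Kgauss (hσ : 0 < σ) (hz : z ≠ 0) {v : Fin 2 → ℂ} (hv : v ≠ 0) :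
    IsSPDKer (projKer (Kgauss m σ z) v) := by
  classical
  intro n x hx c ⟨μ₀, hμ₀⟩
  change 0 < gramForm _ x c
  rw [gramForm_projKer, sum_cip_Kgauss_eq_gramForm]
  refine lt_of_le_of_ne (gramForm_gaussKernel_nonneg hσ.le _ _) (Ne.symm fun h => hv ?_)
  set a : EuclideanSpace ℝ (Fin m) → ℂ := fun y => ∑ μ ∈ univ.filter (x · = y), c μ
  have hshift : ∀ y, v 0 * a y + v 1 * a (y - z) = 0 := fun y => by
    rw [← sum_filter_shiftedPoints_eq]
    exact sum_fiber_eq_zero_of_gramForm_gaussKernel_eq_zero hσ h y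
  have ha : a (x μ₀) = c μ₀ := by
    simp only [a, hx.eq_iff, filter_eq', mem_univ, if_true, sum_singleton]
  have hsupp : a.support.Finite := (Set.finite_range x).subset <|
    Function.support_subset_iff'.2 fun y hy =>
      sum_eq_zero fun μ hμ => (hy ⟨μ, (mem_filter.1 hμ).2⟩).elim
  obtain ⟨h0, h1⟩ :=
    eq_zero_of_mul_add_mul_sub_eq_zero hsupp (fun h => hμ₀ (ha ▸ congr_fun h _)) hz hshift
  ext i
  fin_cases i
  exacts [h0, h1]

end Kgauss

/-- For `σ > 0` and `z ∈ ℝ^m \ {0}`, the matrix valued kernel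
`K(x,y) = [[e^{-σ‖x-y‖²}, e^{-σ‖x+z-y‖²}], [e^{-σ‖x-y-z‖²}, e^{-σ‖x-y‖²}]]` is positive
definite but not strictly positive definite, while every scalar valued projection `K_v`,
`v ≠ 0`, is strictly positive definite on `ℝ^m`. -/
theorem stmt_18 (m : ℕ) (σ : ℝ) (hσ : 0 < σ)
    (z : EuclideanSpace ℝ (Fin m)) (hz : z ≠ 0) :
    IsPDMat (Kgauss m σ z) ∧
    ¬ IsSPDMat (Kgauss m σ z) ∧
    (∀ v : Fin 2 → ℂ, v ≠ 0 → IsSPDKer (projKer (Kgauss m σ z) v)) :=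
  ⟨isPDMat_Kgauss hσ.le, not_isSPDMat_Kgauss hz, fun _ hv => isSPDKer_projKer_Kgauss hσ hz hv⟩
end

section
/- Let X be a set and f, g : X → ℝ arbitrary functions. Then every scalar valued projection of the matrix valued kernel K : X × X → M₂(ℂ) defined by K(x,y) = [[2 f(x) f(y), f(x) g(y) + g(x) f(y)], [f(x) g(y) + g(x) f(y), 2 g(x) g(y)]] is a positive definite kernel; moreover, there exist choices of f and g (for instance f(x₁) = f(x₂) = 1, g(x₁) = 1, g(x₂) = 2 for two distinct points x₁, x₂ ∈ X) for which K itself is not positive definite. -/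
open scoped ComplexOrder

/-- The matrix valued kernel
`K(x,y) = [[2f(x)f(y), f(x)g(y)+g(x)f(y)], [f(x)g(y)+g(x)f(y), 2g(x)g(y)]]`. -/
noncomputable def Kfg {X : Type*} (f g : X → ℝ) : X → X → Matrix (Fin 2) (Fin 2) ℂ :=
  fun x y =>
    !![((2 * f x * f y : ℝ) : ℂ), ((f x * g y + g x * f y : ℝ) : ℂ);
       ((f x * g y + g x * f y : ℝ) : ℂ), ((2 * g x * g y : ℝ) : ℂ)]

/-- For arbitrary functions `f, g : X → ℝ`, every scalar valued projection of
the kernel `K(x,y) = [[2f(x)f(y), f(x)g(y)+g(x)f(y)], [f(x)g(y)+g(x)f(y), 2g(x)g(y)]]` is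
positive definite; moreover, if `X` has two distinct points, there exist choices of `f` and
`g` for which `K` itself is not positive definite. -/
theorem stmt_19 {X : Type*} :
    (∀ f g : X → ℝ, ∀ v : Fin 2 → ℂ, v ≠ 0 → IsPDKer (projKer (Kfg f g) v)) ∧
    ((∃ x₁ x₂ : X, x₁ ≠ x₂) → ∃ f g : X → ℝ, ¬ IsPDMat (Kfg f g)) := by
  constructor
  · intro f g v _ n x _ c
    set φ : Fin n → ℂ := fun μ => (f (x μ) : ℂ) * v 0 + (g (x μ) : ℂ) * v 1 with hφ
    have key : ∀ μ ν, c μ * (starRingEnd ℂ) (c ν) * projKer (Kfg f g) v (x μ) (x ν)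
        = (c μ * (starRingEnd ℂ) (φ μ)) * (starRingEnd ℂ) (c ν * (starRingEnd ℂ) (φ ν))
          + (c μ * φ μ) * (starRingEnd ℂ) (c ν * φ ν) := by
      intro μ ν
      simp only [projKer, cip, Kfg, hφ, Fin.sum_univ_two, Matrix.mulVec,
        dotProduct, Matrix.cons_val', Matrix.cons_val_zero, Matrix.cons_val_one,
        Matrix.head_cons, Matrix.head_fin_const, Matrix.of_apply, Matrix.empty_val',
        Matrix.cons_val_fin_one, map_add, map_mul, Complex.conj_ofReal, Complex.conj_conj, map_ofNat]
      push_cast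
      ring
    calc ∑ μ, ∑ ν, c μ * (starRingEnd ℂ) (c ν) * projKer (Kfg f g) v (x μ) (x ν)
        = ∑ μ, ∑ ν, ((c μ * (starRingEnd ℂ) (φ μ))
              * (starRingEnd ℂ) (c ν * (starRingEnd ℂ) (φ ν))
            + (c μ * φ μ) * (starRingEnd ℂ) (c ν * φ ν)) := by
          exact Finset.sum_congr rfl fun μ _ => Finset.sum_congr rfl fun ν _ => key μ ν
      _ = (∑ μ, c μ * (starRingEnd ℂ) (φ μ))
            * (starRingEnd ℂ) (∑ μ, c μ * (starRingEnd ℂ) (φ μ))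
          + (∑ μ, c μ * φ μ) * (starRingEnd ℂ) (∑ μ, c μ * φ μ) := by
          simp only [map_sum, map_mul, Finset.sum_mul, Finset.mul_sum,
            Finset.sum_add_distrib]
          congr 1 <;> exact Finset.sum_comm
      _ ≥ 0 := by
          rw [Complex.mul_conj, Complex.mul_conj]
          have h1 := Complex.normSq_nonneg (∑ μ, c μ * (starRingEnd ℂ) (φ μ))
          have h2 := Complex.normSq_nonneg (∑ μ, c μ * φ μ)
          exact add_nonneg (by exact_mod_cast Complex.zero_le_real.2 h1)
            (by exact_mod_cast Complex.zero_le_real.2 h2)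
  · rintro ⟨x₁, x₂, hne⟩
    classical
    refine ⟨fun _ => 1, fun x => if x = x₁ then 1 else 2, fun h => ?_⟩
    have hinj : Function.Injective (![x₁, x₂] : Fin 2 → X) := by
      intro i j hij
      fin_cases i <;> fin_cases j <;> simp_all
    have := h 2 ![x₁, x₂] hinj ![![1, 2], ![-1, -1]]
    rw [show (0 : ℂ) ≤ _ ↔ _ from Complex.le_def] at this
    obtain ⟨hre, -⟩ := this
    simp only [Fin.sum_univ_two, cip, Kfg, Matrix.mulVec, dotProduct,
      Matrix.cons_val', Matrix.cons_val_zero, Matrix.cons_val_one, Matrix.head_cons,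
      Matrix.of_apply, Matrix.empty_val', Matrix.cons_val_fin_one,
      if_pos rfl, if_neg (Ne.symm hne)] at hre
    norm_num at hre
end
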